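/- arXiv:1505.07392 — 5 statements merged into one kernel-verified Lean document; each statement's English description precedes it below -/
import Mathlib

section
/- Let N ≥ 3 be an integer and let σ, s ∈ [0, 2). Assume 2 < p < 2^*(s), and additionally, in case σ > s, assume 2 + (4/σ)·(σ−s)/(N−2) ≤ p. Then there exists a constant C > 0 such that every smooth compactly supported function u : ℝ^N → ℝ satisfies (∫_{ℝ^N} |u(x)|^p ‖x‖^{−s} dx)^{2/p} ≤ C · ∫_{ℝ^N} ( ‖∇u(x)‖² + |u(x)|² ‖x‖^{−σ} ) dx. (This is the continuity of the embedding E ↪ L^p(ℝ^N, dx/|x|^s) of Proposition 2.2, formulated on the dense subspace C_c^∞(ℝ^N).) -/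
open MeasureTheory Metric Set intervalIntegral
open scoped ENNReal NNReal

noncomputable section

namespace HardySobolevAux

local notation "dim" => Module.finrank ℝ

lemma ofReal_norm_eq_coe_nnnorm {F : Type*} [SeminormedAddGroup F] {a : F} :
    ENNReal.ofReal ‖a‖ = (‖a‖₊ : ℝ≥0∞) := ofReal_norm a

lemma nnnorm_rpow_two {F : Type*} [SeminormedAddGroup F] (a : F) :
    (‖a‖₊ : ℝ≥0∞) ^ (2:ℝ) = ENNReal.ofReal (‖a‖ ^ 2) := by
  rw [← ofReal_norm_eq_coe_nnnorm,
    ENNReal.ofReal_rpow_of_nonneg (norm_nonneg a) (by norm_num : (0:ℝ) ≤ 2)]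
  congr 1
  rw [show ((2:ℝ)) = ((2:ℕ):ℝ) by norm_num, Real.rpow_natCast]

lemma pointwise_holder (U X : ℝ≥0∞) (hX0 : X ≠ 0) (hXt : X ≠ ⊤)
    {a b c q p s σ : ℝ} (ha0 : 0 ≤ a) (hb0 : 0 ≤ b) (hc0 : 0 ≤ c) (hq0 : 0 ≤ q)
    (hpq : 2*a + q*b + 2*c = p) (hps : 2*a + σ*c = s) :
    (U ^ (2:ℝ) * X ^ (-(2:ℝ))) ^ a * ((U ^ q) ^ b * (U ^ (2:ℝ) * X ^ (-σ)) ^ c)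
      = U ^ p * X ^ (-s) := by
  rw [ENNReal.mul_rpow_of_nonneg _ _ ha0, ENNReal.mul_rpow_of_nonneg _ _ hc0]
  simp only [← ENNReal.rpow_mul]
  calc (U ^ (2*a) * X ^ (-(2:ℝ)*a)) * (U ^ (q*b) * (U ^ (2*c) * X ^ (-σ*c)))
      = (U ^ (2*a) * (U ^ (q*b) * U ^ (2*c))) * (X ^ (-(2:ℝ)*a) * X ^ (-σ*c)) := by ring
    _ = U ^ p * X ^ (-s) := by
        rw [← ENNReal.rpow_add_of_nonneg (q*b) (2*c) (mul_nonneg hq0 hb0)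
            (by positivity : (0:ℝ) ≤ 2*c),
          ← ENNReal.rpow_add_of_nonneg (2*a) _ (by positivity : (0:ℝ) ≤ 2*a)
            (add_nonneg (mul_nonneg hq0 hb0) (by positivity)),
          ← ENNReal.rpow_add _ _ hX0 hXt]
        congr 1
        · congr 1; linarith
        · congr 1; linarith

/-- One-dimensional Hardy inequality on an interval. -/
lemma hardy1d {f : ℝ → ℝ} (hf : ContDiff ℝ 1 f) {R : ℝ} (hR : 0 < R)
    (hf0 : ∀ r : ℝ, R ≤ r → f r = 0) {n : ℕ} (hn : 3 ≤ n) :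
    ∫ r in (0:ℝ)..R, (f r) ^ 2 * r ^ (n - 3)
      ≤ (2 / ((n:ℝ) - 2)) ^ 2 * ∫ r in (0:ℝ)..R, (deriv f r) ^ 2 * r ^ (n - 1) := by
  have hdf : Continuous (deriv f) := hf.continuous_deriv le_rfl
  have hfc : Continuous f := hf.continuous
  have hn2 : (0:ℝ) < (n:ℝ) - 2 := by
    have : (3:ℝ) ≤ (n:ℝ) := by exact_mod_cast hn
    linarith
  set I := ∫ r in (0:ℝ)..R, (f r) ^ 2 * r ^ (n - 3) with hI
  set J := ∫ r in (0:ℝ)..R, (deriv f r) ^ 2 * r ^ (n - 1) with hJ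
  -- integrability of all the pieces
  have int1 : IntervalIntegrable (fun r => (f r) ^ 2 * r ^ (n - 3)) volume 0 R :=
    ((hfc.pow 2).mul (continuous_pow _)).intervalIntegrable 0 R
  have int2 : IntervalIntegrable (fun r => (deriv f r) ^ 2 * r ^ (n - 1)) volume 0 R :=
    (((hdf.pow 2)).mul (continuous_pow _)).intervalIntegrable 0 R
  have int3 : IntervalIntegrable (fun r => 2 * f r * deriv f r * r ^ (n - 2)) volume 0 R :=
    ((((continuous_const.mul hfc).mul hdf)).mul (continuous_pow _)).intervalIntegrable 0 R
  -- integration by parts identity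
  have key : ∫ r in (0:ℝ)..R,
      (2 * f r * deriv f r * r ^ (n - 2) + ((n:ℝ) - 2) * (f r ^ 2 * r ^ (n - 3))) = 0 := by
    have hder : ∀ r ∈ uIcc (0:ℝ) R, HasDerivAt (fun r => f r ^ 2 * r ^ (n - 2))
        (2 * f r * deriv f r * r ^ (n - 2) + ((n:ℝ) - 2) * (f r ^ 2 * r ^ (n - 3))) r := by
      intro r _
      have hd : HasDerivAt f (deriv f r) r :=
        (hf.differentiable one_ne_zero r).hasDerivAt
      have h1 : HasDerivAt (fun r => f r ^ 2) (2 * f r * deriv f r) r := by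
        simpa [mul_comm, mul_assoc, Pi.pow_def] using hd.pow 2
      have h2 : HasDerivAt (fun r : ℝ => r ^ (n - 2)) (((n:ℝ) - 2) * r ^ (n - 3)) r := by
        have := hasDerivAt_pow (n - 2) r
        have e1 : n - 2 - 1 = n - 3 := by omega
        have e2 : ((n - 2 : ℕ) : ℝ) = (n:ℝ) - 2 := by
          have : (2:ℕ) ≤ n := by omega
          push_cast [Nat.cast_sub this]
          ring
        rwa [e1, e2] at this
      have := h1.fun_mul h2
      refine this.congr_deriv ?_
      ring
    have := integral_eq_sub_of_hasDerivAt hder ?_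
    · rw [this, hf0 R le_rfl]
      have : (0:ℝ) ^ (n - 2) = 0 := by
        apply zero_pow; omega
      simp [this]
    · apply IntervalIntegrable.add int3
      exact (((continuous_const.mul ((hfc.pow 2).mul (continuous_pow _)))).intervalIntegrable 0 R)
  have keyI : ∫ r in (0:ℝ)..R, 2 * f r * deriv f r * r ^ (n - 2) = -(((n:ℝ) - 2) * I) := by
    have hsplit := intervalIntegral.integral_add (f := fun r => 2 * f r * deriv f r * r ^ (n - 2))
      (g := fun r => ((n:ℝ) - 2) * (f r ^ 2 * r ^ (n - 3))) int3
      ((continuous_const.mul ((hfc.pow 2).mul (continuous_pow _))).intervalIntegrable 0 R)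
    rw [hsplit] at key
    rw [intervalIntegral.integral_const_mul] at key
    linarith
  -- pointwise quadratic bound
  have hmono : ∫ r in (0:ℝ)..R, (2 * ((n:ℝ) - 2)) * (-(2 * f r * deriv f r * r ^ (n - 2)))
      ≤ ∫ r in (0:ℝ)..R,
        (((n:ℝ) - 2) ^ 2 * (f r ^ 2 * r ^ (n - 3)) + 4 * ((deriv f r) ^ 2 * r ^ (n - 1))) := by
    apply intervalIntegral.integral_mono_on hR.le
    · exact (int3.neg.const_mul _)
    · exact ((int1.const_mul _).add (int2.const_mul _))
    · intro r hr
      have hr0 : 0 ≤ r := hr.1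
      have e1 : r ^ (n - 2) = r ^ (n - 3) * r := by
        rw [← pow_succ]; congr 1; omega
      have e2 : r ^ (n - 1) = r ^ (n - 3) * r ^ 2 := by
        rw [← pow_add]; congr 1; omega
      have hP : (0:ℝ) ≤ r ^ (n - 3) := pow_nonneg hr0 _
      rw [e1, e2]
      nlinarith [mul_nonneg (sq_nonneg (((n:ℝ) - 2) * f r + 2 * deriv f r * r)) hP]
  rw [intervalIntegral.integral_const_mul, intervalIntegral.integral_neg, keyI] at hmono
  rw [intervalIntegral.integral_add (int1.const_mul _) (int2.const_mul _),
    intervalIntegral.integral_const_mul, intervalIntegral.integral_const_mul] at hmono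
  -- conclude
  have h4 : ((n:ℝ) - 2) ^ 2 * I ≤ 4 * J := by nlinarith
  rw [div_pow, div_mul_eq_mul_div, le_div_iff₀ (by positivity)]
  nlinarith

variable {E : Type*} [NormedAddCommGroup E] [NormedSpace ℝ E] [MeasurableSpace E]
  [BorelSpace E] [FiniteDimensional ℝ E] [Nontrivial E]
  (μ : Measure E) [μ.IsAddHaarMeasure]

/-- Polar-coordinates formula for lower integrals. -/
lemma lintegral_polar (g : E → ℝ≥0∞) (hg : Measurable g) :
    ∫⁻ x, g x ∂μ = ∫⁻ ω : sphere (0:E) 1, ∫⁻ r in Set.Ioi (0:ℝ),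
      ENNReal.ofReal (r ^ (dim E - 1)) * g (r • (ω : E)) ∂volume ∂μ.toSphere := by
  have hsm : Measurable (fun y : sphere (0:E) 1 × Set.Ioi (0:ℝ) => g ((y.2 : ℝ) • (y.1 : E))) := by
    apply hg.comp
    exact ((continuous_subtype_val.comp continuous_snd).smul
      (continuous_subtype_val.comp continuous_fst)).measurable
  calc ∫⁻ x, g x ∂μ
      = ∫⁻ x : ({0}ᶜ : Set E), g x ∂(μ.comap (↑)) := by
        rw [lintegral_subtype_comap (measurableSet_singleton (0:E)).compl,
          MeasureTheory.restrict_compl_singleton]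
    _ = ∫⁻ y : sphere (0:E) 1 × Set.Ioi (0:ℝ), g ((y.2 : ℝ) • (y.1 : E))
          ∂(μ.toSphere.prod (.volumeIoiPow (dim E - 1))) := by
        rw [← (μ.measurePreserving_homeomorphUnitSphereProd).lintegral_comp_emb
          (Homeomorph.measurableEmbedding _) (fun y => g ((y.2 : ℝ) • (y.1 : E)))]
        refine lintegral_congr fun x => ?_
        congr 1
        simp [homeomorphUnitSphereProd, smul_inv_smul₀ (norm_ne_zero_iff.2 x.2)]
    _ = ∫⁻ ω : sphere (0:E) 1, ∫⁻ r : Set.Ioi (0:ℝ), g ((r : ℝ) • (ω : E))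
          ∂(.volumeIoiPow (dim E - 1)) ∂μ.toSphere := lintegral_prod _ hsm.aemeasurable
    _ = _ := by
        refine lintegral_congr fun ω => ?_
        have h2 : Measurable fun r : Set.Ioi (0:ℝ) => g ((r : ℝ) • (ω : E)) :=
          hg.comp (measurable_subtype_coe.smul_const _)
        rw [Measure.volumeIoiPow, lintegral_withDensity_eq_lintegral_mul _
          ((measurable_subtype_coe.pow_const _).ennreal_ofReal) h2,
          ← lintegral_subtype_comap measurableSet_Ioi]
        rfl

/-- choose a positive radius outside which `u` vanishes -/
lemma exists_radius {u : E → ℝ} (h2u : HasCompactSupport u) :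
    ∃ R : ℝ, 0 < R ∧ ∀ x : E, R ≤ ‖x‖ → u x = 0 := by
  obtain ⟨R, hR⟩ := h2u.isBounded.subset_closedBall 0
  refine ⟨max R 0 + 1, by positivity, fun x hx => ?_⟩
  apply image_eq_zero_of_notMem_tsupport
  intro hmem
  have := mem_closedBall_zero_iff.1 (hR hmem)
  have h1 : R ≤ max R 0 := le_max_left _ _
  linarith

/-- Hardy inequality along a ray, in lower-integral form. -/
lemma hardy_ray {u : E → ℝ} (hu : ContDiff ℝ 1 u) {R : ℝ} (hR : 0 < R)
    (hsupp : ∀ x : E, R ≤ ‖x‖ → u x = 0) (hn : 3 ≤ dim E) {ω : E} (hω : ‖ω‖ = 1) :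
    ∫⁻ r in Set.Ioi (0:ℝ), ENNReal.ofReal (r ^ (dim E - 1)) *
        ((‖u (r • ω)‖₊ : ℝ≥0∞) ^ (2:ℝ) * (‖r • ω‖₊ : ℝ≥0∞) ^ (-(2:ℝ)))
      ≤ ENNReal.ofReal ((2 / ((dim E : ℝ) - 2)) ^ 2) *
        ∫⁻ r in Set.Ioi (0:ℝ), ENNReal.ofReal (r ^ (dim E - 1)) *
          (‖fderiv ℝ u (r • ω)‖₊ : ℝ≥0∞) ^ (2:ℝ) := by
  set n := dim E with hn'
  set f : ℝ → ℝ := fun r => u (r • ω) with hfdef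
  have hf : ContDiff ℝ 1 f := hu.comp ((contDiff_id.smul contDiff_const))
  have hfc : Continuous f := hf.continuous
  have hDc : Continuous fun x => fderiv ℝ u x := hu.continuous_fderiv one_ne_zero
  have hdr : ∀ r : ℝ, HasDerivAt f (fderiv ℝ u (r • ω) ω) r := by
    intro r
    have h1 : HasFDerivAt u (fderiv ℝ u (r • ω)) (r • ω) :=
      (hu.differentiable one_ne_zero _).hasFDerivAt
    have h2 : HasDerivAt (fun t : ℝ => t • ω) ω r := by
      simpa using (hasDerivAt_id r).smul_const ω
    exact h1.comp_hasDerivAt r h2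
  have hderiv : ∀ r : ℝ, deriv f r = fderiv ℝ u (r • ω) ω := fun r => (hdr r).deriv
  have hf0 : ∀ r : ℝ, R ≤ r → f r = 0 := by
    intro r hr
    apply hsupp
    rw [norm_smul, hω, mul_one, Real.norm_eq_abs, abs_of_pos (lt_of_lt_of_le hR hr)]
    exact hr
  have hnorm : ∀ r : ℝ, 0 < r → ‖r • ω‖ = r := by
    intro r hr
    rw [norm_smul, hω, mul_one, Real.norm_eq_abs, abs_of_pos hr]
  -- the three real integrands
  set g : ℝ → ℝ := fun r => f r ^ 2 * r ^ (n - 3) with hgdef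
  set k : ℝ → ℝ := fun r => ‖fderiv ℝ u (r • ω)‖ ^ 2 * r ^ (n - 1) with hkdef
  have hgc : Continuous g := (hfc.pow 2).mul (continuous_pow _)
  have hkc : Continuous k :=
    (((hDc.comp (continuous_id.smul continuous_const)).norm.pow 2)).mul (continuous_pow _)
  -- Step A : rewrite LHS
  have stepA : ∫⁻ r in Set.Ioi (0:ℝ), ENNReal.ofReal (r ^ (n - 1)) *
      ((‖u (r • ω)‖₊ : ℝ≥0∞) ^ (2:ℝ) * (‖r • ω‖₊ : ℝ≥0∞) ^ (-(2:ℝ)))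
      = ∫⁻ r in Set.Ioi (0:ℝ), ENNReal.ofReal (g r) := by
    refine setLIntegral_congr_fun measurableSet_Ioi ?_
    intro r hr
    dsimp only
    have hr0 : (0:ℝ) < r := hr
    have h1 : (‖u (r • ω)‖₊ : ℝ≥0∞) ^ (2:ℝ) = ENNReal.ofReal (f r ^ 2) := by
      rw [nnnorm_rpow_two]
      congr 1
      rw [Real.norm_eq_abs, sq_abs]
    have h2 : (‖r • ω‖₊ : ℝ≥0∞) ^ (-(2:ℝ)) = ENNReal.ofReal (r ^ (-(2:ℝ))) := by
      rw [← ofReal_norm_eq_coe_nnnorm, hnorm r hr0, ENNReal.ofReal_rpow_of_pos hr0]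
    rw [h1, h2, ← ENNReal.ofReal_mul (by positivity), ← ENNReal.ofReal_mul (by positivity)]
    congr 1
    have e2 : r ^ (n - 1) = r ^ (n - 3) * r ^ 2 := by
      rw [← pow_add]; congr 1; omega
    rw [Real.rpow_neg hr0.le, show ((2:ℝ)) = ((2:ℕ):ℝ) by norm_num, Real.rpow_natCast, e2]
    field_simp [hgdef]
    ring
  -- Step B : reduce to interval integral
  have hIoi : Set.Ioc (0:ℝ) R ∪ Set.Ioi R = Set.Ioi 0 := Set.Ioc_union_Ioi_eq_Ioi hR.le
  have stepB : ∫⁻ r in Set.Ioi (0:ℝ), ENNReal.ofReal (g r)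
      = ENNReal.ofReal (∫ r in (0:ℝ)..R, g r) := by
    rw [← hIoi, lintegral_union measurableSet_Ioi (Set.Ioc_disjoint_Ioi le_rfl)]
    have hz : ∫⁻ r in Set.Ioi R, ENNReal.ofReal (g r) = 0 := by
      have : ∀ r ∈ Set.Ioi R, ENNReal.ofReal (g r) = 0 := by
        intro r hr
        have : f r = 0 := hf0 r (le_of_lt hr)
        simp [hgdef, this]
      rw [setLIntegral_congr_fun measurableSet_Ioi this]
      simp
    rw [hz, add_zero, intervalIntegral.integral_of_le hR.le,
      ofReal_integral_eq_lintegral_ofReal (hgc.integrableOn_Ioc)]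
    exact (ae_restrict_iff' measurableSet_Ioc).2 (Filter.Eventually.of_forall
      fun r hr => mul_nonneg (sq_nonneg _) (pow_nonneg hr.1.le _))
  -- Step C : 1-d Hardy and comparison with the full gradient
  have hC : ∫ r in (0:ℝ)..R, g r
      ≤ (2 / ((n:ℝ) - 2)) ^ 2 * ∫ r in (0:ℝ)..R, k r := by
    refine (hardy1d hf hR hf0 hn).trans ?_
    have hcc : Continuous fun r => (deriv f r) ^ 2 * r ^ (n - 1) :=
      ((hf.continuous_deriv le_rfl).pow 2).mul (continuous_pow _)
    refine mul_le_mul_of_nonneg_left ?_ (by positivity)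
    apply intervalIntegral.integral_mono_on hR.le (hcc.intervalIntegrable 0 R)
      (hkc.intervalIntegrable 0 R)
    intro r hr
    have : |deriv f r| ≤ ‖fderiv ℝ u (r • ω)‖ := by
      rw [hderiv r]
      calc |fderiv ℝ u (r • ω) ω| ≤ ‖fderiv ℝ u (r • ω)‖ * ‖ω‖ :=
        (fderiv ℝ u (r • ω)).le_opNorm ω
      _ = ‖fderiv ℝ u (r • ω)‖ := by rw [hω, mul_one]
    have h2 : (deriv f r) ^ 2 ≤ ‖fderiv ℝ u (r • ω)‖ ^ 2 := by
      rw [← sq_abs]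
      exact pow_le_pow_left₀ (abs_nonneg _) this 2
    exact mul_le_mul_of_nonneg_right h2 (pow_nonneg hr.1 _)
  -- Step D : back to lower integrals
  have stepD : ENNReal.ofReal (∫ r in (0:ℝ)..R, k r)
      ≤ ∫⁻ r in Set.Ioi (0:ℝ), ENNReal.ofReal (r ^ (n - 1)) *
          (‖fderiv ℝ u (r • ω)‖₊ : ℝ≥0∞) ^ (2:ℝ) := by
    have e1 : ∫⁻ r in Set.Ioi (0:ℝ), ENNReal.ofReal (r ^ (n - 1)) *
        (‖fderiv ℝ u (r • ω)‖₊ : ℝ≥0∞) ^ (2:ℝ)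
        = ∫⁻ r in Set.Ioi (0:ℝ), ENNReal.ofReal (k r) := by
      refine setLIntegral_congr_fun measurableSet_Ioi ?_
      intro r hr
      dsimp only
      rw [nnnorm_rpow_two, ← ENNReal.ofReal_mul (pow_nonneg (le_of_lt hr) _)]
      congr 1
      simp [hkdef, mul_comm]
    rw [e1, intervalIntegral.integral_of_le hR.le,
      ofReal_integral_eq_lintegral_ofReal (hkc.integrableOn_Ioc)
        ((ae_restrict_iff' measurableSet_Ioc).2 (Filter.Eventually.of_forall
          fun r hr => mul_nonneg (sq_nonneg _) (pow_nonneg hr.1.le _)))]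
    exact lintegral_mono_set Set.Ioc_subset_Ioi_self
  calc ∫⁻ r in Set.Ioi (0:ℝ), ENNReal.ofReal (r ^ (n - 1)) *
      ((‖u (r • ω)‖₊ : ℝ≥0∞) ^ (2:ℝ) * (‖r • ω‖₊ : ℝ≥0∞) ^ (-(2:ℝ)))
      = ENNReal.ofReal (∫ r in (0:ℝ)..R, g r) := by rw [stepA, stepB]
    _ ≤ ENNReal.ofReal ((2 / ((n:ℝ) - 2)) ^ 2 * ∫ r in (0:ℝ)..R, k r) :=
        ENNReal.ofReal_le_ofReal hC
    _ = ENNReal.ofReal ((2 / ((n:ℝ) - 2)) ^ 2) * ENNReal.ofReal (∫ r in (0:ℝ)..R, k r) :=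
        ENNReal.ofReal_mul (by positivity)
    _ ≤ _ := mul_le_mul_right stepD _

/-- Hardy's inequality on `E`, in lower-integral form. -/
lemma hardy {u : E → ℝ} (hu : ContDiff ℝ 1 u) (h2u : HasCompactSupport u)
    (hn : 3 ≤ dim E) :
    ∫⁻ x, (‖u x‖₊ : ℝ≥0∞) ^ (2:ℝ) * (‖x‖₊ : ℝ≥0∞) ^ (-(2:ℝ)) ∂μ
      ≤ ENNReal.ofReal ((2 / ((dim E : ℝ) - 2)) ^ 2) *
        ∫⁻ x, (‖fderiv ℝ u x‖₊ : ℝ≥0∞) ^ (2:ℝ) ∂μ := by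
  obtain ⟨R, hR, hsupp⟩ := exists_radius h2u
  have huc : Continuous u := hu.continuous
  have hm1 : Measurable fun x : E => (‖u x‖₊ : ℝ≥0∞) ^ (2:ℝ) * (‖x‖₊ : ℝ≥0∞) ^ (-(2:ℝ)) := by
    fun_prop
  have hm2 : Measurable fun x : E => (‖fderiv ℝ u x‖₊ : ℝ≥0∞) ^ (2:ℝ) := by
    have : Continuous fun x => fderiv ℝ u x := hu.continuous_fderiv one_ne_zero
    fun_prop
  rw [lintegral_polar μ _ hm1, lintegral_polar μ _ hm2, ← lintegral_const_mul' _ _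
    (by exact ENNReal.ofReal_ne_top)]
  refine lintegral_mono fun ω => ?_
  exact hardy_ray hu hR hsupp hn (mem_sphere_zero_iff_norm.1 ω.2)

/-- Finiteness of the weighted integral `∫ u² ‖x‖^(-τ)`. -/
lemma lintegral_weight_lt_top {u : E → ℝ} (hu : Continuous u)
    (h2u : HasCompactSupport u) {τ : ℝ} (hτ0 : 0 ≤ τ) (hτ : τ < 2) (hn : 3 ≤ dim E) :
    ∫⁻ x, (‖u x‖₊ : ℝ≥0∞) ^ (2:ℝ) * (‖x‖₊ : ℝ≥0∞) ^ (-τ) ∂μ < ⊤ := by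
  obtain ⟨R, hR, hsupp⟩ := exists_radius h2u
  obtain ⟨M, hM⟩ := h2u.exists_bound_of_continuous hu
  have hM0 : 0 ≤ M := le_trans (norm_nonneg _) (hM 0)
  set n := dim E with hn'
  set c : ℝ := ((n:ℝ) - 1) - τ with hc
  have hc1 : (-1:ℝ) < c := by
    have : (3:ℝ) ≤ (n:ℝ) := by exact_mod_cast hn
    simp only [hc]
    linarith
  -- the inner 1-d integral is finite
  have hfin : ∫⁻ r in Set.Ioc (0:ℝ) R, ENNReal.ofReal (r ^ c) < ⊤ := by
    have h1 : IntervalIntegrable (fun r : ℝ => r ^ c) volume 0 R :=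
      intervalIntegral.intervalIntegrable_rpow' hc1
    have h2 : IntegrableOn (fun r : ℝ => r ^ c) (Set.Ioc 0 R) volume :=
      (intervalIntegrable_iff_integrableOn_Ioc_of_le hR.le).1 h1
    calc ∫⁻ r in Set.Ioc (0:ℝ) R, ENNReal.ofReal (r ^ c)
        ≤ ∫⁻ r in Set.Ioc (0:ℝ) R, (‖(fun r : ℝ => r ^ c) r‖₊ : ℝ≥0∞) := by
          refine lintegral_mono fun r => ?_
          rw [← ofReal_norm_eq_coe_nnnorm]
          exact ENNReal.ofReal_le_ofReal (le_abs_self _)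
      _ < ⊤ := h2.2
  set K : ℝ≥0∞ := ENNReal.ofReal (M ^ 2) * ∫⁻ r in Set.Ioc (0:ℝ) R, ENNReal.ofReal (r ^ c)
    with hK
  have hKfin : K < ⊤ := ENNReal.mul_lt_top ENNReal.ofReal_lt_top hfin
  have hm : Measurable fun x : E => (‖u x‖₊ : ℝ≥0∞) ^ (2:ℝ) * (‖x‖₊ : ℝ≥0∞) ^ (-τ) := by
    fun_prop
  rw [lintegral_polar μ _ hm]
  -- bound each ray integral by K
  have hray : ∀ ω : E, ‖ω‖ = 1 → ∫⁻ r in Set.Ioi (0:ℝ),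
      ENNReal.ofReal (r ^ (n - 1)) *
        ((‖u (r • ω)‖₊ : ℝ≥0∞) ^ (2:ℝ) * (‖r • ω‖₊ : ℝ≥0∞) ^ (-τ)) ≤ K := by
    intro ω hω
    have hIoi : Set.Ioc (0:ℝ) R ∪ Set.Ioi R = Set.Ioi 0 := Set.Ioc_union_Ioi_eq_Ioi hR.le
    rw [← hIoi, lintegral_union measurableSet_Ioi (Set.Ioc_disjoint_Ioi le_rfl)]
    have hz : ∫⁻ r in Set.Ioi R, ENNReal.ofReal (r ^ (n - 1)) *
        ((‖u (r • ω)‖₊ : ℝ≥0∞) ^ (2:ℝ) * (‖r • ω‖₊ : ℝ≥0∞) ^ (-τ)) = 0 := by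
      have : ∀ r ∈ Set.Ioi R, ENNReal.ofReal (r ^ (n - 1)) *
          ((‖u (r • ω)‖₊ : ℝ≥0∞) ^ (2:ℝ) * (‖r • ω‖₊ : ℝ≥0∞) ^ (-τ)) = 0 := by
        intro r hr
        have hr0 : 0 < r := lt_trans hR hr
        have : u (r • ω) = 0 := by
          apply hsupp
          rw [norm_smul, hω, mul_one, Real.norm_eq_abs, abs_of_pos hr0]
          exact le_of_lt hr
        rw [this]
        simp only [nnnorm_zero, ENNReal.coe_zero]
        rw [ENNReal.zero_rpow_of_pos (by norm_num : (0:ℝ) < 2)]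
        simp
      rw [setLIntegral_congr_fun measurableSet_Ioi this]
      simp
    rw [hz, add_zero, hK]
    rw [← lintegral_const_mul' _ _ ENNReal.ofReal_ne_top]
    refine setLIntegral_mono' measurableSet_Ioc fun r hr => ?_
    have hr0 : 0 < r := hr.1
    have h2 : (‖r • ω‖₊ : ℝ≥0∞) ^ (-τ) = ENNReal.ofReal (r ^ (-τ)) := by
      rw [← ofReal_norm_eq_coe_nnnorm, norm_smul, hω, mul_one, Real.norm_eq_abs,
        abs_of_pos hr0, ENNReal.ofReal_rpow_of_pos hr0]
    have h1 : (‖u (r • ω)‖₊ : ℝ≥0∞) ^ (2:ℝ) ≤ ENNReal.ofReal (M ^ 2) := by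
      rw [nnnorm_rpow_two]
      apply ENNReal.ofReal_le_ofReal
      have := hM (r • ω)
      nlinarith [norm_nonneg (u (r • ω))]
    calc ENNReal.ofReal (r ^ (n - 1)) *
        ((‖u (r • ω)‖₊ : ℝ≥0∞) ^ (2:ℝ) * (‖r • ω‖₊ : ℝ≥0∞) ^ (-τ))
        ≤ ENNReal.ofReal (r ^ (n - 1)) *
          (ENNReal.ofReal (M ^ 2) * ENNReal.ofReal (r ^ (-τ))) := by
          rw [h2]; exact mul_le_mul_right (mul_le_mul_left h1 _) _
      _ = ENNReal.ofReal (M ^ 2) * ENNReal.ofReal (r ^ c) := by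
          have hprod : ENNReal.ofReal (r ^ (n-1)) * ENNReal.ofReal (r ^ (-τ))
              = ENNReal.ofReal (r ^ c) := by
            rw [← ENNReal.ofReal_mul (pow_nonneg hr0.le _)]
            congr 1
            rw [← Real.rpow_natCast r (n-1), ← Real.rpow_add hr0]
            congr 1
            have hcast : ((n-1:ℕ):ℝ) = (n:ℝ) - 1 := by
              push_cast [Nat.cast_sub (by omega : 1 ≤ n)]
              ring
            rw [hcast, hc]
            ring
          rw [mul_left_comm, hprod]
      _ ≤ _ := le_rfl
  refine lt_of_le_of_lt
    (lintegral_mono fun ω => hray (ω:E) (mem_sphere_zero_iff_norm.1 ω.2)) ?_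
  rw [lintegral_const]
  exact ENNReal.mul_lt_top hKfin (measure_lt_top _ _)

/-- The Sobolev inequality, in lower-integral form. -/
lemma sobolev (hn : 3 ≤ dim E) :
    ∃ CS : ℝ≥0∞, CS ≠ ⊤ ∧ ∀ u : E → ℝ, ContDiff ℝ 1 u → HasCompactSupport u →
      ∫⁻ x, (‖u x‖₊ : ℝ≥0∞) ^ (2 * (dim E : ℝ) / ((dim E : ℝ) - 2)) ∂μ
        ≤ CS * (∫⁻ x, (‖fderiv ℝ u x‖₊ : ℝ≥0∞) ^ (2:ℝ) ∂μ)
            ^ ((dim E : ℝ) / ((dim E : ℝ) - 2)) := by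
  have hn3 : (3:ℝ) ≤ (dim E : ℝ) := by exact_mod_cast hn
  have hn2 : (0:ℝ) < (dim E : ℝ) - 2 := by linarith
  have hnpos : (0:ℝ) < (dim E : ℝ) := by linarith
  set q : ℝ := 2 * (dim E : ℝ) / ((dim E : ℝ) - 2) with hq
  have hq0 : 0 < q := by positivity
  set p' : ℝ≥0 := Real.toNNReal q with hp'def
  have hp'c : (p' : ℝ) = q := Real.coe_toNNReal _ hq0.le
  have hp'0 : (p' : ℝ≥0∞) ≠ 0 := by
    simp only [ne_eq, ENNReal.coe_eq_zero]
    intro h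
    rw [h] at hp'c
    simp at hp'c
    linarith
  refine ⟨((SNormLESNormFDerivOfEqConst ℝ μ ((2:ℝ≥0):ℝ) : ℝ≥0) : ℝ≥0∞) ^ q,
    ENNReal.rpow_ne_top_of_nonneg hq0.le ENNReal.coe_ne_top, ?_⟩
  intro u hu h2u
  have hp' : (p' : ℝ)⁻¹ = ((2:ℝ≥0):ℝ)⁻¹ - (dim E : ℝ)⁻¹ := by
    rw [hp'c, hq]
    push_cast
    field_simp
  have key := eLpNorm_le_eLpNorm_fderiv_of_eq μ hu h2u (p := 2) (p' := p')
    (by norm_num) (by omega) hp'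
  set A := ∫⁻ x, (‖u x‖₊ : ℝ≥0∞) ^ q ∂μ with hA
  set G := ∫⁻ x, (‖fderiv ℝ u x‖₊ : ℝ≥0∞) ^ (2:ℝ) ∂μ with hG
  have e1 : eLpNorm u (↑p') μ = A ^ (1/q) := by
    rw [eLpNorm_eq_lintegral_rpow_enorm_toReal hp'0 ENNReal.coe_ne_top]
    congr 1 <;> rw [ENNReal.coe_toReal, hp'c] <;> rfl
  have e2 : eLpNorm (fderiv ℝ u) 2 μ = G ^ ((1:ℝ)/2) := by
    rw [eLpNorm_eq_lintegral_rpow_enorm_toReal (by norm_num) (by norm_num)]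
    congr 1 <;> simp
  have hrec : (A ^ (1/q)) ^ q = A := by
    rw [← ENNReal.rpow_mul, one_div, inv_mul_cancel₀ hq0.ne', ENNReal.rpow_one]
  calc A = (A ^ (1/q)) ^ q := hrec.symm
    _ ≤ ((SNormLESNormFDerivOfEqConst ℝ μ ((2:ℝ≥0):ℝ) : ℝ≥0∞) * (G ^ ((1:ℝ)/2))) ^ q := by
        apply ENNReal.rpow_le_rpow _ hq0.le
        rw [← e1, ← e2]
        exact key
    _ = ((SNormLESNormFDerivOfEqConst ℝ μ ((2:ℝ≥0):ℝ) : ℝ≥0∞)) ^ q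
          * G ^ ((dim E : ℝ) / ((dim E : ℝ) - 2)) := by
        rw [ENNReal.mul_rpow_of_nonneg _ _ hq0.le, ← ENNReal.rpow_mul]
        congr 1
        rw [hq]
        field_simp

end HardySobolevAux

end

set_option maxHeartbeats 1000000 in
open HardySobolevAux in
/-- Continuity of the embedding `E ↪ L^p(ℝ^N, dx/|x|^s)` (Proposition 2.2),
formulated on smooth compactly supported functions. -/
theorem stmt_0 (N : ℕ) (hN : 3 ≤ N) (σ s p : ℝ)
    (hσ0 : 0 ≤ σ) (hσ2 : σ < 2) (hs0 : 0 ≤ s) (hs2 : s < 2)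
    (hp1 : 2 < p) (hp2 : p < 2 * ((N : ℝ) - s) / ((N : ℝ) - 2))
    (hcase : s < σ → 2 + (4 / σ) * ((σ - s) / ((N : ℝ) - 2)) ≤ p) :
    ∃ C > (0 : ℝ), ∀ u : EuclideanSpace ℝ (Fin N) → ℝ,
      ContDiff ℝ (⊤ : ℕ∞) u → HasCompactSupport u →
      (∫ x, |u x| ^ p * ‖x‖ ^ (-s)) ^ (2 / p)
        ≤ C * ∫ x, (‖fderiv ℝ u x‖ ^ 2 + |u x| ^ 2 * ‖x‖ ^ (-σ)) := by
  set E := EuclideanSpace ℝ (Fin N) with hE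
  have hdim : Module.finrank ℝ E = N := finrank_euclideanSpace_fin
  haveI : Nontrivial E := Module.nontrivial_of_finrank_pos (R := ℝ) (by omega)
  have hn : 3 ≤ Module.finrank ℝ E := by omega
  -- real-number preliminaries
  have hn3 : (3:ℝ) ≤ (N:ℝ) := by exact_mod_cast hN
  have hn2 : (0:ℝ) < (N:ℝ) - 2 := by linarith
  have h2σ : (0:ℝ) < 2 - σ := by linarith
  have hp0 : (0:ℝ) < p := by linarith
  obtain ⟨CS, hCStop, hSob⟩ := sobolev (volume : Measure E) hn
  rw [hdim] at hSob
  set q : ℝ := 2 * (N:ℝ) / ((N:ℝ) - 2) with hq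
  have hq0 : 0 < q := by positivity
  set b : ℝ := (p - 2) * ((N:ℝ) - 2) / 4 with hb
  set a : ℝ := (s - σ * (1 - b)) / (2 - σ) with ha
  set c : ℝ := (2 * (1 - b) - s) / (2 - σ) with hc
  have hb0 : 0 ≤ b := by
    apply div_nonneg _ (by norm_num)
    nlinarith
  have hb1 : b < 1 - s / 2 := by
    rw [hb]
    rw [lt_div_iff₀ hn2] at hp2
    rw [div_lt_iff₀ (by norm_num : (0:ℝ) < 4)]
    nlinarith
  have ha0 : 0 ≤ a := by
    apply div_nonneg _ h2σ.le
    rcases le_or_gt σ s with h | h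
    · nlinarith
    · have hσpos : 0 < σ := lt_of_le_of_lt hs0 h
      have h3 := hcase h
      have hne1 : σ ≠ 0 := hσpos.ne'
      have hne2 : ((N:ℝ) - 2) ≠ 0 := hn2.ne'
      have h4 : 0 < σ * ((N:ℝ) - 2) := mul_pos hσpos hn2
      have h5 : (2 + 4 / σ * ((σ - s) / ((N:ℝ) - 2))) * (σ * ((N:ℝ)-2))
          = 2 * (σ * ((N:ℝ)-2)) + 4 * (σ - s) := by
        field_simp
      have h6 : 2 * (σ * ((N:ℝ)-2)) + 4 * (σ - s) ≤ p * (σ * ((N:ℝ)-2)) := by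
        rw [← h5]
        exact mul_le_mul_of_nonneg_right h3 h4.le
      rw [hb]
      nlinarith [h6]
  have hc0 : 0 ≤ c := by
    apply div_nonneg _ h2σ.le
    linarith
  have hsum : a + b + c = 1 := by
    rw [ha, hc]
    field_simp
    ring
  have hps : 2 * a + σ * c = s := by
    rw [ha, hc]
    field_simp
    ring
  have hpq : 2 * a + q * b + 2 * c = p := by
    rw [ha, hb, hc, hq]
    field_simp
    ring
  have hq2 : (N:ℝ) / ((N:ℝ) - 2) = q / 2 := by
    rw [hq]; ring
  -- the constant
  set κ : ℝ≥0∞ := ENNReal.ofReal ((2 / ((N:ℝ) - 2)) ^ 2) with hκ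
  set K : ℝ≥0∞ := κ ^ a * CS ^ b with hK
  have hκtop : κ ≠ ⊤ := ENNReal.ofReal_ne_top
  have hKtop : K ≠ ⊤ :=
    ENNReal.mul_ne_top (ENNReal.rpow_ne_top_of_nonneg ha0 hκtop)
      (ENNReal.rpow_ne_top_of_nonneg hb0 hCStop)
  refine ⟨K.toReal ^ (2/p) + 1, by positivity, ?_⟩
  intro u hu' h2u
  have hu : ContDiff ℝ 1 u := hu'.of_le (by simp)
  have huc : Continuous u := hu.continuous
  have hDc : Continuous fun x => fderiv ℝ u x := hu.continuous_fderiv one_ne_zero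
  -- main quantities
  set G := ∫⁻ x : E, (‖fderiv ℝ u x‖₊ : ℝ≥0∞) ^ (2:ℝ) with hG
  set B := ∫⁻ x : E, (‖u x‖₊ : ℝ≥0∞) ^ (2:ℝ) * (‖x‖₊ : ℝ≥0∞) ^ (-σ) with hB
  set H := ∫⁻ x : E, (‖u x‖₊ : ℝ≥0∞) ^ (2:ℝ) * (‖x‖₊ : ℝ≥0∞) ^ (-(2:ℝ)) with hH
  set S := ∫⁻ x : E, (‖u x‖₊ : ℝ≥0∞) ^ q with hS
  set L := ∫⁻ x : E, (‖u x‖₊ : ℝ≥0∞) ^ p * (‖x‖₊ : ℝ≥0∞) ^ (-s) with hL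
  set T := G + B with hT
  have hae : ∀ᵐ x : E, x ≠ 0 := by
    rw [ae_iff]
    have he : {x : E | ¬ x ≠ 0} = {0} := by ext x; simp
    rw [he]
    exact measure_singleton 0
  have hm0 : Measurable fun x : E => (‖u x‖₊ : ℝ≥0∞) ^ (2:ℝ) * (‖x‖₊ : ℝ≥0∞) ^ (-(2:ℝ)) := by
    fun_prop
  have hm1 : Measurable fun x : E => (‖u x‖₊ : ℝ≥0∞) ^ q := by fun_prop
  have hm2 : Measurable fun x : E => (‖u x‖₊ : ℝ≥0∞) ^ (2:ℝ) * (‖x‖₊ : ℝ≥0∞) ^ (-σ) := by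
    fun_prop
  -- Hölder step
  have holder : L ≤ H ^ a * (S ^ b * B ^ c) := by
    have hHo := ENNReal.lintegral_prod_norm_pow_le (μ := (volume : Measure E)) Finset.univ
      (f := ![fun x : E => (‖u x‖₊ : ℝ≥0∞) ^ (2:ℝ) * (‖x‖₊ : ℝ≥0∞) ^ (-(2:ℝ)),
              fun x : E => (‖u x‖₊ : ℝ≥0∞) ^ q,
              fun x : E => (‖u x‖₊ : ℝ≥0∞) ^ (2:ℝ) * (‖x‖₊ : ℝ≥0∞) ^ (-σ)])
      (p := ![a, b, c])
      (by
        intro i _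
        fin_cases i
        exacts [hm0.aemeasurable, hm1.aemeasurable, hm2.aemeasurable])
      (by simpa [Fin.sum_univ_three] using hsum)
      (by
        intro i _
        fin_cases i <;> simpa using by first | exact ha0 | exact hb0 | exact hc0)
    have hcong : L = ∫⁻ x : E, ∏ i : Fin 3,
        (![fun x : E => (‖u x‖₊ : ℝ≥0∞) ^ (2:ℝ) * (‖x‖₊ : ℝ≥0∞) ^ (-(2:ℝ)),
           fun x : E => (‖u x‖₊ : ℝ≥0∞) ^ q,
           fun x : E => (‖u x‖₊ : ℝ≥0∞) ^ (2:ℝ) * (‖x‖₊ : ℝ≥0∞) ^ (-σ)] i x) ^ (![a, b, c] i) := by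
      refine lintegral_congr_ae ?_
      filter_upwards [hae] with x hx
      have hX0 : (‖x‖₊ : ℝ≥0∞) ≠ 0 := by
        simp [hx]
      simp only [Fin.prod_univ_three, Matrix.cons_val_zero, Matrix.cons_val_one, Matrix.head_cons,
        Matrix.cons_val_two, Matrix.tail_cons]
      rw [mul_assoc, pointwise_holder _ _ hX0 ENNReal.coe_ne_top ha0 hb0 hc0 hq0.le hpq hps]
    rw [hcong]
    refine hHo.trans_eq ?_
    simp only [Fin.prod_univ_three, Matrix.cons_val_zero, Matrix.cons_val_one, Matrix.head_cons,
      Matrix.cons_val_two, Matrix.tail_cons]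
    rw [mul_assoc]
  -- the three estimates
  have hHardy : H ≤ κ * G := by
    have := hardy (volume : Measure E) hu h2u hn
    rw [hdim] at this
    exact this
  have hSb : S ≤ CS * G ^ ((N:ℝ) / ((N:ℝ) - 2)) := hSob u hu h2u
  have hGT : G ≤ T := le_self_add
  have hBT : B ≤ T := le_add_self
  have hTtop : T ≠ ⊤ := by
    have h1 : G < ⊤ := by
      have hcs : HasCompactSupport fun x : E => ‖fderiv ℝ u x‖ ^ 2 :=
        (h2u.fderiv ℝ).comp_left (g := fun y : E →L[ℝ] ℝ => ‖y‖ ^ 2) (by simp)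
      have hint : Integrable (fun x : E => ‖fderiv ℝ u x‖ ^ 2) :=
        (hDc.norm.pow 2).integrable_of_hasCompactSupport hcs
      have he : ∀ x : E, (‖fderiv ℝ u x‖₊ : ℝ≥0∞) ^ (2:ℝ)
          = (‖(‖fderiv ℝ u x‖ ^ 2 : ℝ)‖₊ : ℝ≥0∞) := by
        intro x
        rw [nnnorm_rpow_two, ← ofReal_norm_eq_coe_nnnorm, Real.norm_of_nonneg (by positivity)]
      rw [hG, lintegral_congr he]
      exact hint.2
    have h2 : B < ⊤ := lintegral_weight_lt_top (volume : Measure E) huc h2u hσ0 hσ2 hn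
    exact (ENNReal.add_lt_top.2 ⟨h1, h2⟩).ne
  -- combine
  have main : L ≤ K * T ^ (p/2) := by
    calc L ≤ H ^ a * (S ^ b * B ^ c) := holder
      _ ≤ (κ * T) ^ a * ((CS * T ^ ((N:ℝ) / ((N:ℝ) - 2))) ^ b * T ^ c) := by
          refine mul_le_mul' (ENNReal.rpow_le_rpow (hHardy.trans ?_) ha0)
            (mul_le_mul' (ENNReal.rpow_le_rpow (hSb.trans ?_) hb0)
              (ENNReal.rpow_le_rpow hBT hc0))
          · exact mul_le_mul_right hGT κ
          · exact mul_le_mul_right (ENNReal.rpow_le_rpow hGT (by positivity)) CS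
      _ = K * (T ^ a * (T ^ (q/2 * b) * T ^ c)) := by
          rw [ENNReal.mul_rpow_of_nonneg _ _ ha0, ENNReal.mul_rpow_of_nonneg _ _ hb0,
            ← ENNReal.rpow_mul, hq2, hK]
          ring
      _ = K * T ^ (p/2) := by
          congr 1
          rw [← ENNReal.rpow_add_of_nonneg (q/2*b) c
              (mul_nonneg (div_nonneg hq0.le (by norm_num)) hb0) hc0,
            ← ENNReal.rpow_add_of_nonneg a _ ha0
              (add_nonneg (mul_nonneg (div_nonneg hq0.le (by norm_num)) hb0) hc0)]
          congr 1
          linarith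
  -- convert to real integrals
  have hLHS : ∫ x : E, |u x| ^ p * ‖x‖ ^ (-s) = L.toReal := by
    rw [integral_eq_lintegral_of_nonneg_ae
      (Filter.Eventually.of_forall fun x => by positivity)
      (by fun_prop : Measurable fun x : E => |u x| ^ p * ‖x‖ ^ (-s)).aestronglyMeasurable]
    congr 1
    refine lintegral_congr_ae ?_
    filter_upwards [hae] with x hx
    rw [ENNReal.ofReal_mul (by positivity)]
    congr 1
    · rw [← Real.norm_eq_abs, ← ENNReal.ofReal_rpow_of_nonneg (norm_nonneg _) hp0.le,
        ofReal_norm_eq_coe_nnnorm]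
    · rw [← ENNReal.ofReal_rpow_of_pos (norm_pos_iff.2 hx), ofReal_norm_eq_coe_nnnorm]
  have hRHS : ∫ x : E, (‖fderiv ℝ u x‖ ^ 2 + |u x| ^ 2 * ‖x‖ ^ (-σ)) = T.toReal := by
    rw [integral_eq_lintegral_of_nonneg_ae
      (Filter.Eventually.of_forall fun x => by positivity)
      (by fun_prop :
        Measurable fun x : E => ‖fderiv ℝ u x‖ ^ 2 + |u x| ^ 2 * ‖x‖ ^ (-σ)).aestronglyMeasurable]
    congr 1
    calc ∫⁻ x : E, ENNReal.ofReal (‖fderiv ℝ u x‖ ^ 2 + |u x| ^ 2 * ‖x‖ ^ (-σ))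
        = ∫⁻ x : E, ((‖fderiv ℝ u x‖₊ : ℝ≥0∞) ^ (2:ℝ)
            + (‖u x‖₊ : ℝ≥0∞) ^ (2:ℝ) * (‖x‖₊ : ℝ≥0∞) ^ (-σ)) := by
          refine lintegral_congr_ae ?_
          filter_upwards [hae] with x hx
          rw [ENNReal.ofReal_add (by positivity) (by positivity)]
          congr 1
          · rw [nnnorm_rpow_two]
          · rw [ENNReal.ofReal_mul (by positivity)]
            congr 1
            · rw [nnnorm_rpow_two, Real.norm_eq_abs]
            · rw [← ENNReal.ofReal_rpow_of_pos (norm_pos_iff.2 hx), ofReal_norm_eq_coe_nnnorm]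
      _ = T := by
          rw [hT, hG, hB]
          refine lintegral_add_left ?_ _
          fun_prop
  rw [hLHS, hRHS]
  have hfin2 : K * T ^ (p/2) ≠ ⊤ :=
    ENNReal.mul_ne_top hKtop (ENNReal.rpow_ne_top_of_nonneg (by positivity) hTtop)
  have h1 : L.toReal ≤ K.toReal * T.toReal ^ (p/2) := by
    have := ENNReal.toReal_mono hfin2 main
    rwa [ENNReal.toReal_mul, ← ENNReal.toReal_rpow] at this
  have h3 : L.toReal ^ (2/p) ≤ (K.toReal * T.toReal ^ (p/2)) ^ (2/p) :=
    Real.rpow_le_rpow ENNReal.toReal_nonneg h1 (by positivity)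
  refine h3.trans ?_
  rw [Real.mul_rpow ENNReal.toReal_nonneg (by positivity)]
  have e : (T.toReal ^ (p/2)) ^ (2/p) = T.toReal := by
    rw [← Real.rpow_mul ENNReal.toReal_nonneg,
      show p/2*(2/p) = 1 by field_simp, Real.rpow_one]
  rw [e]
  refine mul_le_mul_of_nonneg_right ?_ ENNReal.toReal_nonneg
  linarith [Real.rpow_nonneg (ENNReal.toReal_nonneg (a := K)) (2/p)]
end

section
/- (Uniform tightness, Lemma 3.4.) Let N ≥ 3 be an integer, 0 ≤ s₁ < 2, 0 < s₂ < 2, and let p ≥ 1 satisfy p + 1 < 2^*(s₁). Then for every M > 0 and every ε > 0 there exists R > 0 with the following property: every smooth compactly supported function u : ℝ^N → ℝ with ∫_{ℝ^N} ‖∇u(x)‖² dx ≤ M and ∫_{ℝ^N} |u(x)|^{p+1} ‖x‖^{−s₁} dx ≤ M satisfies ∫_{‖x‖ ≥ R} |u(x)|^{2^*(s₂)} ‖x‖^{−s₂} dx < ε. -/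
open MeasureTheory Metric Set
open scoped ENNReal NNReal


open MeasureTheory Metric Set
open scoped ENNReal NNReal

lemma aux_weight_int (N : ℕ) {s : ℝ} (hs0 : 0 ≤ s) (hsN : s < N) (r₀ : ℝ) :
    IntegrableOn (fun x : EuclideanSpace ℝ (Fin N) => ‖x‖ ^ (-s)) (closedBall 0 r₀) := by
  rcases eq_or_lt_of_le hs0 with h | hs
  · simp only [← h, neg_zero, Real.rpow_zero]
    exact integrableOn_const measure_closedBall_lt_top.ne
  have hN0 : (0:ℝ) < N := lt_of_le_of_lt hs0 hsN
  have hfr : Module.finrank ℝ (EuclideanSpace ℝ (Fin N)) = N := finrank_euclideanSpace_fin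
  set B := closedBall (0 : EuclideanSpace ℝ (Fin N)) r₀ with hB
  have hmeas : Measurable (fun x : EuclideanSpace ℝ (Fin N) => ‖x‖ ^ (-s)) := by fun_prop
  have hnn : ∀ x : EuclideanSpace ℝ (Fin N), 0 ≤ ‖x‖ ^ (-s) :=
    fun x => Real.rpow_nonneg (norm_nonneg _) _
  constructor
  · exact hmeas.aestronglyMeasurable
  rw [hasFiniteIntegral_iff_ofReal (ae_of_all _ hnn)]
  rw [lintegral_eq_lintegral_meas_le (volume.restrict B) (ae_of_all _ hnn)
    hmeas.aemeasurable]
  set μ' := (volume : Measure (EuclideanSpace ℝ (Fin N))).restrict B with hμ'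
  have hμ'fin : μ' univ < ⊤ := by
    rw [hμ', Measure.restrict_apply_univ]
    exact measure_closedBall_lt_top
  set mB := (volume : Measure (EuclideanSpace ℝ (Fin N))) (ball 0 1) with hmB
  have hmBfin : mB ≠ ⊤ := measure_ball_lt_top.ne
  have hc : -s⁻¹ * N < -1 := by
    have h1 : 1 < s⁻¹ * N := by
      rw [mul_comm, ← div_eq_mul_inv]
      exact (one_lt_div hs).2 hsN
    nlinarith
  calc
    ∫⁻ t in Ioi (0:ℝ), μ' {a | t ≤ ‖a‖ ^ (-s)}
      ≤ ∫⁻ t in Ioc (0:ℝ) 1 ∪ Ioi 1, μ' {a | t ≤ ‖a‖ ^ (-s)} :=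
        lintegral_mono_set Ioi_subset_Ioc_union_Ioi
    _ ≤ (∫⁻ t in Ioc (0:ℝ) 1, μ' {a | t ≤ ‖a‖ ^ (-s)})
        + ∫⁻ t in Ioi (1:ℝ), μ' {a | t ≤ ‖a‖ ^ (-s)} := lintegral_union_le _ _ _
    _ < ⊤ := by
      refine ENNReal.add_lt_top.2 ⟨?_, ?_⟩
      · calc (∫⁻ t in Ioc (0:ℝ) 1, μ' {a | t ≤ ‖a‖ ^ (-s)})
            ≤ ∫⁻ _ in Ioc (0:ℝ) 1, μ' univ :=
              setLIntegral_mono measurable_const (fun t _ => measure_mono (subset_univ _))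
          _ = μ' univ * volume (Ioc (0:ℝ) 1) := by rw [setLIntegral_const]
          _ < ⊤ := by
              apply ENNReal.mul_lt_top hμ'fin
              simp [Real.volume_Ioc]
      · have hsub : ∀ t : ℝ, t ∈ Ioi (1:ℝ) →
            μ' {a | t ≤ ‖a‖ ^ (-s)} ≤ ENNReal.ofReal (t ^ (-s⁻¹ * N)) * mB := by
          intro t ht
          have ht0 : (0:ℝ) < t := lt_trans one_pos ht
          have hss : {a : EuclideanSpace ℝ (Fin N) | t ≤ ‖a‖ ^ (-s)} ⊆
              closedBall 0 (t ^ (-s⁻¹)) := by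
            intro x hx
            simp only [mem_setOf_eq] at hx
            have hx0 : 0 < ‖x‖ := by
              rcases eq_or_lt_of_le (norm_nonneg x) with h0 | h0
              · exfalso
                rw [← h0, Real.zero_rpow (by simpa using hs.ne')] at hx
                exact absurd (lt_of_lt_of_le ht0 hx) (lt_irrefl 0)
              · exact h0
            have := Real.rpow_le_rpow_of_nonpos ht0 hx
              (by simp [le_of_lt, inv_pos.2 hs] : -s⁻¹ ≤ 0)
            rw [← Real.rpow_mul (norm_nonneg x)] at this
            have he : -s * -s⁻¹ = 1 := by
              field_simp
            rw [he, Real.rpow_one] at this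
            exact mem_closedBall_zero_iff.2 this
          calc μ' {a | t ≤ ‖a‖ ^ (-s)}
              ≤ μ' (closedBall 0 (t ^ (-s⁻¹))) := measure_mono hss
            _ ≤ (volume : Measure (EuclideanSpace ℝ (Fin N))) (closedBall 0 (t ^ (-s⁻¹))) :=
                Measure.restrict_le_self _
            _ = ENNReal.ofReal ((t ^ (-s⁻¹)) ^ Module.finrank ℝ (EuclideanSpace ℝ (Fin N))) * mB :=
                Measure.addHaar_closedBall _ _ (Real.rpow_nonneg ht0.le _)
            _ = ENNReal.ofReal (t ^ (-s⁻¹ * N)) * mB := by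
                rw [hfr, ← Real.rpow_natCast (t ^ (-s⁻¹)) N, ← Real.rpow_mul ht0.le]
        calc (∫⁻ t in Ioi (1:ℝ), μ' {a | t ≤ ‖a‖ ^ (-s)})
            ≤ ∫⁻ t in Ioi (1:ℝ), ENNReal.ofReal (t ^ (-s⁻¹ * N)) * mB := by
              apply setLIntegral_mono ?_ hsub
              apply Measurable.mul_const
              exact ENNReal.measurable_ofReal.comp (by fun_prop)
          _ = (∫⁻ t in Ioi (1:ℝ), ENNReal.ofReal (t ^ (-s⁻¹ * N))) * mB :=
              lintegral_mul_const' mB _ hmBfin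
          _ < ⊤ := ENNReal.mul_lt_top
              (IntegrableOn.setLIntegral_lt_top (integrableOn_Ioi_rpow_of_lt hc one_pos))
              hmBfin.lt_top
lemma aux_sobolev (N : ℕ) (hN : 3 ≤ N) (M : ℝ) (hM : 0 ≤ M)
    (u : EuclideanSpace ℝ (Fin N) → ℝ) (hu : ContDiff ℝ 1 u) (h2u : HasCompactSupport u)
    (hgrad : (∫ x, ‖fderiv ℝ u x‖ ^ 2) ≤ M) :
    (∫ x, |u x| ^ (2 * (N:ℝ) / ((N:ℝ) - 2))) ≤
      (((eLpNormLESNormFDerivOfEqInnerConst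
          (volume : Measure (EuclideanSpace ℝ (Fin N))) 2 : ℝ≥0) : ℝ) * M ^ (2:ℝ)⁻¹)
        ^ (2 * (N:ℝ) / ((N:ℝ) - 2)) := by
  have hn3 : (3:ℝ) ≤ (N:ℝ) := by exact_mod_cast hN
  have hn2 : (0:ℝ) < (N:ℝ) - 2 := by linarith
  set n : ℝ := (N:ℝ) with hn
  set qs : ℝ := 2 * n / (n - 2) with hqs
  have hqs0 : 0 < qs := by positivity
  have hfr : Module.finrank ℝ (EuclideanSpace ℝ (Fin N)) = N := finrank_euclideanSpace_fin
  set K := eLpNormLESNormFDerivOfEqInnerConst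
      (volume : Measure (EuclideanSpace ℝ (Fin N))) 2 with hK
  set p' : ℝ≥0 := Real.toNNReal qs with hp'def
  have hp'r : (p' : ℝ) = qs := Real.coe_toNNReal qs hqs0.le
  have hp'0 : p' ≠ 0 := by
    rw [hp'def]
    simp only [ne_eq, Real.toNNReal_eq_zero, not_le]
    exact hqs0
  have hp' : ((p' : ℝ))⁻¹ = ((2:ℝ≥0) : ℝ)⁻¹ - ((Module.finrank ℝ (EuclideanSpace ℝ (Fin N)) : ℝ))⁻¹ := by
    rw [hp'r, hfr, hqs]
    push_cast
    rw [← hn]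
    have hn0 : n ≠ 0 := by positivity
    field_simp
  have hsob := eLpNorm_le_eLpNorm_fderiv_of_eq_inner
    (volume : Measure (EuclideanSpace ℝ (Fin N))) hu h2u (p := 2) (p' := p')
    one_le_two (by rw [hfr]; omega) (by exact_mod_cast hp')
  simp only [ENNReal.coe_ofNat, NNReal.coe_ofNat] at hsob
  have hmem : MemLp u p' volume := hu.continuous.memLp_of_hasCompactSupport h2u
  have h1 : eLpNorm u p' volume
      = ENNReal.ofReal ((∫ x, ‖u x‖ ^ qs) ^ qs⁻¹) := by
    rw [hmem.eLpNorm_eq_integral_rpow_norm (by exact_mod_cast hp'0) ENNReal.coe_ne_top]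
    congr 1 <;> rw [ENNReal.coe_toReal, hp'r]
  have hfd : Continuous (fderiv ℝ u) := (hu.fderiv_right (m := 0) le_rfl).continuous
  have hmem2 : MemLp (fderiv ℝ u) 2 volume :=
    hfd.memLp_of_hasCompactSupport (h2u.fderiv ℝ)
  have h2 : eLpNorm (fderiv ℝ u) 2 volume
      = ENNReal.ofReal ((∫ x, ‖fderiv ℝ u x‖ ^ (2:ℝ)) ^ ((2:ℝ))⁻¹) := by
    rw [hmem2.eLpNorm_eq_integral_rpow_norm two_ne_zero ENNReal.ofNat_ne_top]
    norm_num
  set A : ℝ := (∫ x, ‖u x‖ ^ qs) ^ qs⁻¹ with hA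
  set B : ℝ := (∫ x, ‖fderiv ℝ u x‖ ^ (2:ℝ)) ^ ((2:ℝ))⁻¹ with hB
  have hA0 : 0 ≤ A := Real.rpow_nonneg (integral_nonneg fun x => Real.rpow_nonneg (norm_nonneg _) _) _
  have hB0 : 0 ≤ B := Real.rpow_nonneg (integral_nonneg fun x => Real.rpow_nonneg (norm_nonneg _) _) _
  rw [h1, h2] at hsob
  have hAB : A ≤ (K : ℝ) * B := by
    have := ENNReal.toReal_mono (by finiteness) hsob
    rwa [ENNReal.toReal_ofReal hA0, ENNReal.toReal_mul, ENNReal.coe_toReal,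
      ENNReal.toReal_ofReal hB0] at this
  have hBM : B ≤ M ^ (2:ℝ)⁻¹ := by
    apply Real.rpow_le_rpow (integral_nonneg fun x => Real.rpow_nonneg (norm_nonneg _) _) ?_ (by norm_num)
    calc (∫ x, ‖fderiv ℝ u x‖ ^ (2:ℝ)) = ∫ x, ‖fderiv ℝ u x‖ ^ 2 := by
          congr 1
          ext x
          rw [show (2:ℝ) = ((2:ℕ):ℝ) by norm_num, Real.rpow_natCast]
      _ ≤ M := hgrad
  have hAle : A ≤ (K:ℝ) * M ^ (2:ℝ)⁻¹ :=
    le_trans hAB (by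
      apply mul_le_mul_of_nonneg_left hBM (NNReal.coe_nonneg K))
  have habs : (∫ x, |u x| ^ qs) = ∫ x, ‖u x‖ ^ qs := by
    simp [Real.norm_eq_abs]
  rw [habs]
  calc (∫ x, ‖u x‖ ^ qs) = A ^ qs := by
        rw [hA, Real.rpow_inv_rpow (integral_nonneg fun x => Real.rpow_nonneg (norm_nonneg _) _) hqs0.ne']
    _ ≤ ((K:ℝ) * M ^ (2:ℝ)⁻¹) ^ qs := Real.rpow_le_rpow hA0 hAle hqs0.le

section weights

-- Choice of interpolation weights (pure algebra).
lemma aux_weights (n s₁ s₂ p : ℝ) (hn3 : 3 ≤ n)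
    (hs₁0 : 0 ≤ s₁) (hs₂0 : 0 < s₂) (hs₂2 : s₂ < 2) (hp : 1 ≤ p)
    (hkey : (p + 1) * (n - 2) < 2 * (n - s₁)) :
    ∃ w₁ w₂ w₃ τ δ : ℝ, 0 ≤ w₁ ∧ 0 ≤ w₂ ∧ 0 ≤ w₃ ∧ w₁ + w₂ + w₃ = 1 ∧ n < τ ∧ 0 < δ ∧
      w₁ * (2 * n / (n - 2)) + w₃ * (p + 1) = 2 * (n - s₂) / (n - 2) ∧
      w₂ * τ + w₃ * s₁ + δ = s₂ := by
  have hn2 : (0:ℝ) < n - 2 := by linarith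
  have hn0 : (0:ℝ) < n := by linarith
  set q2 : ℝ := 2 * (n - s₂) / (n - 2) with hq2
  have hq2_gt2 : 2 < q2 := by
    rw [hq2, lt_div_iff₀ hn2]; nlinarith
  have hs1L : s₁ < n - (n - 2) * (p + 1) / 2 := by linarith
  have hL0 : (0:ℝ) < n - (n - 2) * (p + 1) / 2 := lt_of_le_of_lt hs₁0 hs1L
  have hs2crit : s₂ = n - (n - 2) * q2 / 2 := by
    rw [hq2]; field_simp; ring
  rcases le_or_gt (p + 1) q2 with hA | hB
  · -- case p + 1 ≤ q2
    set L : ℝ := n - (n - 2) * (p + 1) / 2 with hLdef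
    have hs2L : s₂ ≤ L := by
      rw [hq2, le_div_iff₀ hn2] at hA
      rw [hLdef]; nlinarith
    have hw3pos : 0 < s₂ / L := div_pos hs₂0 hL0
    have hw3le1 : s₂ / L ≤ 1 := (div_le_one hL0).2 hs2L
    have hmul : s₂ / L * s₁ < s₂ := by
      have h1 : s₂ / L * s₁ < s₂ / L * L := by
        exact mul_lt_mul_of_pos_left hs1L hw3pos
      rw [div_mul_cancel₀ _ hL0.ne'] at h1
      exact h1
    refine ⟨1 - s₂ / L, 0, s₂ / L, n + 1, s₂ - (s₂ / L) * s₁,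
      by linarith, le_refl 0, hw3pos.le, by ring, by linarith, by linarith, ?_, by ring⟩
    have hqsL : 2 * n / (n - 2) - (p + 1) = 2 * L / (n - 2) := by
      rw [hLdef]; field_simp
    have e1 : (1 - s₂ / L) * (2 * n / (n - 2)) + s₂ / L * (p + 1)
        = 2 * n / (n - 2) - s₂ / L * (2 * n / (n - 2) - (p + 1)) := by ring
    have e2 : s₂ / L * (2 * L / (n - 2)) = 2 * s₂ / (n - 2) := by
      field_simp
    rw [e1, hqsL, e2, hq2]
    ring
  · -- case q2 < p + 1
    have hpm : (0:ℝ) < p + 1 - 2 := by linarith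
    set θ : ℝ := (p + 1 - q2) / (p + 1 - 2) with hθdef
    have hθ0 : 0 < θ := div_pos (by linarith) hpm
    have hθ1 : θ < 1 := (div_lt_one hpm).2 (by linarith)
    have hq2θ : θ * (p + 1 - 2) = p + 1 - q2 := div_mul_cancel₀ _ hpm.ne'
    have hθq2 : 2 * θ + (1 - θ) * (p + 1) = q2 := by linear_combination -hq2θ
    have hs2e : s₂ = 2 * θ + (1 - θ) * (n - (n - 2) * (p + 1) / 2) := by
      rw [hs2crit, ← hθq2]; ring
    have he0 : 0 < s₂ - 2 * θ - (1 - θ) * s₁ := by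
      nlinarith [mul_pos (sub_pos.2 hθ1) (sub_pos.2 hs1L)]
    refine ⟨θ * (n - 2) / n, 2 * θ / n, 1 - θ,
      n + (s₂ - 2 * θ - (1 - θ) * s₁) * n / (4 * θ), (s₂ - 2 * θ - (1 - θ) * s₁) / 2,
      by positivity, by positivity, by linarith, by field_simp; ring, ?_, by positivity, ?_, ?_⟩
    · have : 0 < (s₂ - 2 * θ - (1 - θ) * s₁) * n / (4 * θ) := by positivity
      linarith
    · have h1 : θ * (n - 2) / n * (2 * n / (n - 2)) = 2 * θ := by
        field_simp
      rw [h1]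
      exact hθq2
    · field_simp
      ring

end weights
set_option maxHeartbeats 1000000 in
/-- Uniform tightness (Lemma 3.4). -/
theorem stmt_7 (N : ℕ) (hN : 3 ≤ N) (s₁ s₂ p : ℝ)
    (hs₁0 : 0 ≤ s₁) (hs₁2 : s₁ < 2) (hs₂0 : 0 < s₂) (hs₂2 : s₂ < 2)
    (hp : 1 ≤ p) (hp2 : p + 1 < 2 * ((N : ℝ) - s₁) / ((N : ℝ) - 2))
    (M ε : ℝ) (hM : 0 < M) (hε : 0 < ε) :
    ∃ R > (0 : ℝ), ∀ u : EuclideanSpace ℝ (Fin N) → ℝ,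
      ContDiff ℝ (⊤ : ℕ∞) u → HasCompactSupport u →
      (∫ x, ‖fderiv ℝ u x‖ ^ 2) ≤ M →
      (∫ x, |u x| ^ (p + 1) * ‖x‖ ^ (-s₁)) ≤ M →
      (∫ x in {x : EuclideanSpace ℝ (Fin N) | R ≤ ‖x‖},
          |u x| ^ (2 * ((N : ℝ) - s₂) / ((N : ℝ) - 2)) * ‖x‖ ^ (-s₂)) < ε := by
  have hn3 : (3:ℝ) ≤ (N:ℝ) := by exact_mod_cast hN
  have hn2 : (0:ℝ) < (N:ℝ) - 2 := by linarith
  have hfr : Module.finrank ℝ (EuclideanSpace ℝ (Fin N)) = N := finrank_euclideanSpace_fin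
  set n : ℝ := (N:ℝ) with hndef
  set qs : ℝ := 2 * n / (n - 2) with hqs
  set q2 : ℝ := 2 * (n - s₂) / (n - 2) with hq2
  have hqs0 : 0 < qs := by positivity
  have hq2_gt2 : 2 < q2 := by rw [hq2, lt_div_iff₀ hn2]; nlinarith
  have hq20 : 0 < q2 := by linarith
  have hkey : (p + 1) * (n - 2) < 2 * (n - s₁) := by
    rw [lt_div_iff₀ hn2] at hp2; linarith
  obtain ⟨w₁, w₂, w₃, τ, δ, hw₁, hw₂, hw₃, hwsum, hτn, hδ0, hexp, hwt⟩ :=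
    aux_weights n s₁ s₂ p hn3 hs₁0 hs₂0 hs₂2 hp hkey
  have hτ0 : 0 < τ := by linarith
  -- constants
  set K := eLpNormLESNormFDerivOfEqInnerConst
      (volume : Measure (EuclideanSpace ℝ (Fin N))) 2 with hK
  set C₁ : ℝ := ((K:ℝ) * M ^ (2:ℝ)⁻¹) ^ qs with hC₁
  have hC₁0 : 0 ≤ C₁ := Real.rpow_nonneg (by positivity) _
  set S₁ := {x : EuclideanSpace ℝ (Fin N) | 1 ≤ ‖x‖} with hS₁def
  have hS₁m : MeasurableSet S₁ := (isClosed_le continuous_const continuous_norm).measurableSet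
  have hτint : IntegrableOn (fun x : EuclideanSpace ℝ (Fin N) => ‖x‖ ^ (-τ)) S₁ volume := by
    have hint1 : Integrable
        (fun x : EuclideanSpace ℝ (Fin N) => (2:ℝ) ^ τ * (1 + ‖x‖) ^ (-τ)) volume :=
      (integrable_one_add_norm (by rw [hfr]; exact hτn)).const_mul _
    apply Integrable.mono' hint1.integrableOn
      ((by fun_prop : Measurable
        (fun x : EuclideanSpace ℝ (Fin N) => ‖x‖ ^ (-τ))).aestronglyMeasurable)
    rw [ae_restrict_iff' hS₁m]
    apply ae_of_all
    intro x hx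
    have hx1 : (1:ℝ) ≤ ‖x‖ := hx
    have hxpos : (0:ℝ) < ‖x‖ := lt_of_lt_of_le one_pos hx1
    have h2x : 1 + ‖x‖ ≤ 2 * ‖x‖ := by linarith
    have hcmp : (2 * ‖x‖) ^ (-τ) ≤ (1 + ‖x‖) ^ (-τ) :=
      Real.rpow_le_rpow_of_nonpos (by positivity) h2x (neg_nonpos.2 hτ0.le)
    rw [Real.norm_eq_abs, abs_of_nonneg (Real.rpow_nonneg (norm_nonneg _) _)]
    calc ‖x‖ ^ (-τ) = (2:ℝ) ^ τ * (2 * ‖x‖) ^ (-τ) := by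
          rw [Real.mul_rpow (by norm_num) (norm_nonneg x), ← mul_assoc,
            ← Real.rpow_add two_pos, add_neg_cancel, Real.rpow_zero, one_mul]
      _ ≤ (2:ℝ) ^ τ * (1 + ‖x‖) ^ (-τ) :=
          mul_le_mul_of_nonneg_left hcmp (by positivity)
  set C₂ : ℝ := ∫ x in S₁, ‖x‖ ^ (-τ) with hC₂
  have hC₂0 : 0 ≤ C₂ :=
    setIntegral_nonneg hS₁m (fun x _ => Real.rpow_nonneg (norm_nonneg _) _)
  set C₃ : ℝ := w₁ * C₁ + w₂ * C₂ + w₃ * M with hC₃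
  have hC₃0 : 0 ≤ C₃ := by
    have := hM.le
    positivity
  set R : ℝ := max 1 (((C₃ + 1) / ε) ^ δ⁻¹) with hRdef
  have hR1 : (1:ℝ) ≤ R := le_max_left _ _
  have hR0 : (0:ℝ) < R := lt_of_lt_of_le one_pos hR1
  have hRδ : R ^ (-δ) * C₃ < ε := by
    have hRpow : (C₃ + 1) / ε ≤ R ^ δ := by
      calc (C₃ + 1) / ε = (((C₃ + 1) / ε) ^ δ⁻¹) ^ δ :=
            (Real.rpow_inv_rpow (by positivity) hδ0.ne').symm
        _ ≤ R ^ δ := Real.rpow_le_rpow (by positivity) (le_max_right _ _) hδ0.le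
    have h1 : (R ^ δ)⁻¹ ≤ ε / (C₃ + 1) := by
      rw [show ε / (C₃ + 1) = ((C₃ + 1) / ε)⁻¹ by rw [inv_div]]
      exact inv_anti₀ (by positivity) hRpow
    rw [Real.rpow_neg hR0.le]
    calc (R ^ δ)⁻¹ * C₃ ≤ ε / (C₃ + 1) * C₃ := mul_le_mul_of_nonneg_right h1 hC₃0
      _ < ε := by
          rw [div_mul_eq_mul_div, div_lt_iff₀ (by positivity)]
          nlinarith
  refine ⟨R, hR0, ?_⟩
  intro u hu h2u hgrad hws
  have hu1 : ContDiff ℝ 1 u := hu.of_le (by simp)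
  have hc : Continuous u := hu1.continuous
  have hI1 : (∫ x, |u x| ^ qs) ≤ C₁ := by
    rw [hC₁]
    exact aux_sobolev N hN M hM.le u hu1 h2u hgrad
  -- support radius and bound
  obtain ⟨r₀', hr₀'⟩ := h2u.isBounded.subset_closedBall (0 : EuclideanSpace ℝ (Fin N))
  set r₀ : ℝ := max r₀' 1 with hr₀def
  have hsupp : tsupport u ⊆ closedBall 0 r₀ :=
    hr₀'.trans (closedBall_subset_closedBall (le_max_left _ _))
  obtain ⟨Cu, hCu⟩ := h2u.exists_bound_of_continuous hc
  have hCu0 : 0 ≤ Cu := le_trans (norm_nonneg (u 0)) (hCu 0)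
  have hp10 : (0:ℝ) < p + 1 := by linarith
  -- global integrability of the weighted p+1 term
  have hhm : Measurable (fun x : EuclideanSpace ℝ (Fin N) =>
      |u x| ^ (p + 1) * ‖x‖ ^ (-s₁)) := by fun_prop
  have hint_h : Integrable
      (fun x : EuclideanSpace ℝ (Fin N) => |u x| ^ (p + 1) * ‖x‖ ^ (-s₁)) volume := by
    apply Integrable.mono'
      (g := fun x => (closedBall (0 : EuclideanSpace ℝ (Fin N)) r₀).indicator
        (fun x => Cu ^ (p + 1) * ‖x‖ ^ (-s₁)) x)
      ?_ hhm.aestronglyMeasurable ?_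
    · exact MeasureTheory.IntegrableOn.integrable_indicator
        ((aux_weight_int N hs₁0 (by linarith) r₀).const_mul (Cu ^ (p + 1)))
        measurableSet_closedBall
    · apply ae_of_all
      intro x
      show ‖|u x| ^ (p + 1) * ‖x‖ ^ (-s₁)‖ ≤ (closedBall (0 : EuclideanSpace ℝ (Fin N)) r₀).indicator
        (fun x => Cu ^ (p + 1) * ‖x‖ ^ (-s₁)) x
      by_cases hx : x ∈ closedBall (0 : EuclideanSpace ℝ (Fin N)) r₀
      · rw [indicator_of_mem hx, Real.norm_eq_abs,
          abs_of_nonneg (mul_nonneg (Real.rpow_nonneg (abs_nonneg _) _)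
            (Real.rpow_nonneg (norm_nonneg _) _))]
        apply mul_le_mul_of_nonneg_right ?_ (Real.rpow_nonneg (norm_nonneg _) _)
        exact Real.rpow_le_rpow (abs_nonneg _) (by simpa [Real.norm_eq_abs] using hCu x) hp10.le
      · have hx' : x ∉ tsupport u := fun hmem => hx (hsupp hmem)
        have hux : u x = 0 := image_eq_zero_of_notMem_tsupport hx'
        rw [indicator_of_notMem hx]
        simp [hux, Real.zero_rpow hp10.ne']
  -- |u|^qs integrable
  have hq_cont : Integrable (fun x : EuclideanSpace ℝ (Fin N) => |u x| ^ qs) volume := by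
    have hcont : Continuous (fun x : EuclideanSpace ℝ (Fin N) => |u x| ^ qs) :=
      Continuous.rpow_const hc.abs (fun x => Or.inr hqs0.le)
    have hsupp' : HasCompactSupport (fun x : EuclideanSpace ℝ (Fin N) => |u x| ^ qs) := by
      have heq : (fun x : EuclideanSpace ℝ (Fin N) => |u x| ^ qs)
          = (fun y : ℝ => |y| ^ qs) ∘ u := rfl
      rw [heq]
      exact h2u.comp_left (by simp [Real.zero_rpow hqs0.ne'])
    exact hcont.integrable_of_hasCompactSupport hsupp'
  set S := {x : EuclideanSpace ℝ (Fin N) | R ≤ ‖x‖} with hSdef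
  have hSm : MeasurableSet S := (isClosed_le continuous_const continuous_norm).measurableSet
  have hSS₁ : S ⊆ S₁ := fun x hx => le_trans hR1 hx
  set g := fun x : EuclideanSpace ℝ (Fin N) =>
    w₁ * |u x| ^ qs + w₂ * ‖x‖ ^ (-τ) + w₃ * (|u x| ^ (p + 1) * ‖x‖ ^ (-s₁)) with hgdef
  have i1 : IntegrableOn (fun x : EuclideanSpace ℝ (Fin N) => w₁ * |u x| ^ qs) S volume :=
    hq_cont.integrableOn.const_mul _
  have i2 : IntegrableOn (fun x : EuclideanSpace ℝ (Fin N) => w₂ * ‖x‖ ^ (-τ)) S volume :=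
    (hτint.mono_set hSS₁).const_mul _
  have i3 : IntegrableOn (fun x : EuclideanSpace ℝ (Fin N) =>
      w₃ * (|u x| ^ (p + 1) * ‖x‖ ^ (-s₁))) S volume :=
    hint_h.integrableOn.const_mul _
  have hgint : IntegrableOn g S volume := (i1.add i2).add i3
  -- pointwise estimate
  have hpoint : ∀ x ∈ S, |u x| ^ q2 * ‖x‖ ^ (-s₂) ≤ R ^ (-δ) * g x := by
    intro x hx
    have hxR : R ≤ ‖x‖ := hx
    have hx0 : (0:ℝ) < ‖x‖ := lt_of_lt_of_le hR0 hxR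
    have hgnn : 0 ≤ g x := by
      rw [hgdef]
      have h1 : (0:ℝ) ≤ |u x| ^ qs := Real.rpow_nonneg (abs_nonneg _) _
      have h2 : (0:ℝ) ≤ ‖x‖ ^ (-τ) := Real.rpow_nonneg (norm_nonneg _) _
      have h3 : (0:ℝ) ≤ |u x| ^ (p + 1) * ‖x‖ ^ (-s₁) :=
        mul_nonneg (Real.rpow_nonneg (abs_nonneg _) _) (Real.rpow_nonneg (norm_nonneg _) _)
      positivity
    rcases eq_or_lt_of_le (abs_nonneg (u x)) with ha0 | ha
    · rw [← ha0, Real.zero_rpow hq20.ne', zero_mul]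
      exact mul_nonneg (Real.rpow_nonneg hR0.le _) hgnn
    · have key : |u x| ^ q2 * ‖x‖ ^ (-s₂)
          = ((|u x| ^ qs) ^ w₁ * (‖x‖ ^ (-τ)) ^ w₂
              * (|u x| ^ (p + 1) * ‖x‖ ^ (-s₁)) ^ w₃) * ‖x‖ ^ (-δ) := by
        have e1 : |u x| ^ q2 = |u x| ^ (qs * w₁) * |u x| ^ ((p + 1) * w₃) := by
          rw [← Real.rpow_add ha]
          congr 1
          linarith [hexp]
        have e2 : ‖x‖ ^ (-s₂) = ‖x‖ ^ (-τ * w₂) * ‖x‖ ^ (-s₁ * w₃) * ‖x‖ ^ (-δ) := by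
          rw [← Real.rpow_add hx0, ← Real.rpow_add hx0]
          congr 1
          linarith [hwt]
        rw [e1, e2,
          Real.mul_rpow (Real.rpow_nonneg (abs_nonneg _) _)
            (Real.rpow_nonneg (norm_nonneg _) _),
          ← Real.rpow_mul (abs_nonneg _), ← Real.rpow_mul (norm_nonneg _),
          ← Real.rpow_mul (abs_nonneg _), ← Real.rpow_mul (norm_nonneg _)]
        ring
      have hgm := Real.geom_mean_le_arith_mean3_weighted hw₁ hw₂ hw₃
        (Real.rpow_nonneg (abs_nonneg (u x)) qs)
        (Real.rpow_nonneg (norm_nonneg x) (-τ))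
        (mul_nonneg (Real.rpow_nonneg (abs_nonneg (u x)) (p + 1))
          (Real.rpow_nonneg (norm_nonneg x) (-s₁))) hwsum
      have hrp : ‖x‖ ^ (-δ) ≤ R ^ (-δ) :=
        Real.rpow_le_rpow_of_nonpos hR0 hxR (neg_nonpos.2 hδ0.le)
      calc |u x| ^ q2 * ‖x‖ ^ (-s₂)
          = ((|u x| ^ qs) ^ w₁ * (‖x‖ ^ (-τ)) ^ w₂
              * (|u x| ^ (p + 1) * ‖x‖ ^ (-s₁)) ^ w₃) * ‖x‖ ^ (-δ) := key
        _ ≤ g x * R ^ (-δ) := by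
            apply mul_le_mul ?_ hrp (Real.rpow_nonneg (norm_nonneg _) _) hgnn
            rw [hgdef]
            exact hgm
        _ = R ^ (-δ) * g x := mul_comm _ _
  -- integrability of the integrand on S
  have hf_int : IntegrableOn
      (fun x : EuclideanSpace ℝ (Fin N) => |u x| ^ q2 * ‖x‖ ^ (-s₂)) S volume := by
    apply Integrable.mono' (hgint.const_mul (R ^ (-δ)))
      ((by fun_prop : Measurable (fun x : EuclideanSpace ℝ (Fin N) =>
        |u x| ^ q2 * ‖x‖ ^ (-s₂))).aestronglyMeasurable)
    rw [ae_restrict_iff' hSm]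
    apply ae_of_all
    intro x hx
    rw [Real.norm_eq_abs, abs_of_nonneg
      (mul_nonneg (Real.rpow_nonneg (abs_nonneg _) _) (Real.rpow_nonneg (norm_nonneg _) _))]
    exact hpoint x hx
  -- putting everything together
  have step1 : (∫ x in S, |u x| ^ q2 * ‖x‖ ^ (-s₂)) ≤ ∫ x in S, R ^ (-δ) * g x :=
    setIntegral_mono_on hf_int (hgint.const_mul _) hSm hpoint
  have step2 : (∫ x in S, R ^ (-δ) * g x) = R ^ (-δ) * ∫ x in S, g x :=
    integral_const_mul _ _
  have hgsum : (∫ x in S, g x) ≤ C₃ := by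
    have e : (∫ x in S, g x) = w₁ * (∫ x in S, |u x| ^ qs)
        + w₂ * (∫ x in S, ‖x‖ ^ (-τ))
        + w₃ * (∫ x in S, |u x| ^ (p + 1) * ‖x‖ ^ (-s₁)) := by
      rw [hgdef]
      have i12 : IntegrableOn (fun x : EuclideanSpace ℝ (Fin N) =>
          w₁ * |u x| ^ qs + w₂ * ‖x‖ ^ (-τ)) S volume := i1.add i2
      rw [integral_add i12 i3, integral_add i1 i2, integral_const_mul, integral_const_mul,
        integral_const_mul]
    have b1 : (∫ x in S, |u x| ^ qs) ≤ C₁ :=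
      le_trans (setIntegral_le_integral hq_cont
        (ae_of_all _ fun x => Real.rpow_nonneg (abs_nonneg _) _)) hI1
    have b2 : (∫ x in S, ‖x‖ ^ (-τ)) ≤ C₂ := by
      rw [hC₂]
      exact setIntegral_mono_set hτint
        (ae_of_all _ fun x => Real.rpow_nonneg (norm_nonneg _) _)
        (HasSubset.Subset.eventuallyLE hSS₁)
    have b3 : (∫ x in S, |u x| ^ (p + 1) * ‖x‖ ^ (-s₁)) ≤ M :=
      le_trans (setIntegral_le_integral hint_h
        (ae_of_all _ fun x => mul_nonneg (Real.rpow_nonneg (abs_nonneg _) _)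
          (Real.rpow_nonneg (norm_nonneg _) _))) hws
    rw [e, hC₃]
    gcongr
  calc (∫ x in S, |u x| ^ q2 * ‖x‖ ^ (-s₂))
      ≤ R ^ (-δ) * ∫ x in S, g x := by rw [← step2]; exact step1
    _ ≤ R ^ (-δ) * C₃ := mul_le_mul_of_nonneg_left hgsum (Real.rpow_nonneg hR0.le _)
    _ < ε := hRδ
end

section
/- (Corollary 4.1.) Let N ≥ 3 be an integer, let 0 ≤ s < 2 and σ > 1. Let (u_n) be a sequence of measurable functions ℝ^N → ℝ with sup_n ∫_{ℝ^N} |u_n(x)|^{2^*(s)} ‖x‖^{−s} dx < ∞, and suppose u_n → u almost everywhere on ℝ^N. Then ∫_{ℝ^N} | |u_n|^{σ−2} u_n − |u_n − u|^{σ−2}(u_n − u) − |u|^{σ−2} u |^{2^*(s)/(σ−1)}(x) ‖x‖^{−s} dx → 0 as n → ∞, i.e. the normalized difference ( |u_n|^{σ−2}u_n − |u_n−u|^{σ−2}(u_n−u) − |u|^{σ−2}u ) / ‖x‖^{(σ−1)s/2^*(s)} converges to 0 in L^{2^*(s)/(σ−1)}(ℝ^N). -/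
/-!
This is the Brezis–Lieb argument, valid for any measure (here `‖x‖^{-s} dx`). Let
`φ t = sign t * |t| ^ p`. Continuity and `p`-homogeneity of `φ` give, for every `ε > 0`, a `C`
with `|φ (a + b) - φ a - φ b| ≤ ε |a|^p + C |b|^p`. With `a = uₙ - u`, `b = u`, the excess of
`|φ uₙ - φ (uₙ - u) - φ u|` over `ε |uₙ - u|^p` is dominated by `C |u|^p` and tends to zero a.e.,
so by dominated convergence its `q`-th power integral tends to zero, `q = 2^*(s) / p`. Since
`∫ |uₙ - u|^{2^*(s)}` stays bounded (Fatou), `limsup ∫ |φ uₙ - φ (uₙ - u) - φ u|^q ≤ const * ε^q`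
for every `ε > 0`.
-/

open MeasureTheory Filter Topology
open scoped ENNReal

/-- `signedRpow (σ - 1) t` is the paper's `|t|^{σ-2} t`. -/
noncomputable def signedRpow (p t : ℝ) : ℝ := Real.sign t * |t| ^ p

section signedRpow

variable {p : ℝ}

@[simp] lemma signedRpow_zero (p : ℝ) : signedRpow p 0 = 0 := by simp [signedRpow]

lemma signedRpow_neg (p t : ℝ) : signedRpow p (-t) = -signedRpow p t := by
  simp [signedRpow, Real.sign_neg]

lemma signedRpow_mul_of_pos {l : ℝ} (hl : 0 < l) (t : ℝ) :
    signedRpow p (l * t) = l ^ p * signedRpow p t := by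
  have hsign : Real.sign (l * t) = Real.sign t := by
    rcases lt_trichotomy t 0 with ht | rfl | ht
    · rw [Real.sign_of_neg ht, Real.sign_of_neg (mul_neg_of_pos_of_neg hl ht)]
    · simp
    · rw [Real.sign_of_pos ht, Real.sign_of_pos (mul_pos hl ht)]
  rw [signedRpow, signedRpow, hsign, abs_mul, abs_of_pos hl, Real.mul_rpow hl.le (abs_nonneg t)]
  ring

lemma abs_signedRpow_le (p t : ℝ) : |signedRpow p t| ≤ |t| ^ p := by
  rw [signedRpow, abs_mul, abs_of_nonneg (Real.rpow_nonneg (abs_nonneg t) p)]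
  refine mul_le_of_le_one_left (by positivity) ?_
  rcases Real.sign_apply_eq t with h | h | h <;> simp [h]

lemma continuous_signedRpow (hp : 0 < p) : Continuous (signedRpow p) := by
  have h : signedRpow p = fun t => max t 0 ^ p - max (-t) 0 ^ p := by
    ext t
    rcases lt_trichotomy t 0 with ht | rfl | ht
    · simp [signedRpow, Real.sign_of_neg ht, ht.le, abs_of_neg ht, Real.zero_rpow hp.ne']
    · simp [Real.zero_rpow hp.ne']
    · simp [signedRpow, Real.sign_of_pos ht, ht.le, abs_of_pos ht, Real.zero_rpow hp.ne']
  rw [h]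
  exact ((continuous_id.max continuous_const).rpow_const fun _ => Or.inr hp.le).sub
    ((continuous_neg.max continuous_const).rpow_const fun _ => Or.inr hp.le)

lemma exists_abs_signedRpow_one_add_sub_le (hp : 0 < p) {ε : ℝ} (hε : 0 < ε) :
    ∃ C, 0 ≤ C ∧ ∀ c,
      |signedRpow p (1 + c) - signedRpow p 1 - signedRpow p c| ≤ ε + C * |c| ^ p := by
  set ψ := fun c => signedRpow p (1 + c) - signedRpow p 1 - signedRpow p c
  have hψ : Continuous ψ := by
    have := continuous_signedRpow hp
    fun_prop
  obtain ⟨δ, hδ, hsmall⟩ := Metric.continuous_iff.1 hψ 0 ε hε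
  set L := (δ⁻¹ + 1) ^ p
  -- for `|c| ≥ δ`, both `1` and `|1 + c|` are at most `(δ⁻¹ + 1) * |c|`
  refine ⟨2 * L + 1, by positivity, fun c => ?_⟩
  rcases lt_or_ge |c| δ with hc | hc
  · have := hsmall c (by simpa [Real.dist_eq] using hc)
    simp only [Real.dist_eq, ψ, sub_zero, add_zero, signedRpow_zero, sub_self] at this
    linarith [this.le, show 0 ≤ (2 * L + 1) * |c| ^ p by positivity]
  · have hc' : 1 ≤ δ⁻¹ * |c| := by rwa [le_inv_mul_iff₀ hδ, mul_one]
    have hle : ∀ y, 0 ≤ y → y ≤ (δ⁻¹ + 1) * |c| → y ^ p ≤ L * |c| ^ p := fun y hy hyc =>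
      (Real.rpow_le_rpow hy hyc hp.le).trans_eq (Real.mul_rpow (by positivity) (abs_nonneg c))
    have h1 : |1 + c| ^ p ≤ L * |c| ^ p :=
      hle _ (abs_nonneg _) ((abs_add_le 1 c).trans (by rw [abs_one]; linarith))
    have h2 : (1 : ℝ) ≤ L * |c| ^ p := by
      simpa using hle 1 zero_le_one (by nlinarith [abs_nonneg c])
    calc |signedRpow p (1 + c) - signedRpow p 1 - signedRpow p c|
        ≤ |signedRpow p (1 + c)| + |signedRpow p 1| + |signedRpow p c| :=
          (abs_sub _ _).trans (add_le_add_left (abs_sub _ _) _)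
      _ ≤ |1 + c| ^ p + 1 + |c| ^ p := by
        gcongr
        · exact abs_signedRpow_le p _
        · simpa using abs_signedRpow_le p 1
        · exact abs_signedRpow_le p _
      _ ≤ ε + (2 * L + 1) * |c| ^ p := by linarith

lemma abs_signedRpow_add_sub_le_of_pos {ε C : ℝ}
    (h : ∀ c, |signedRpow p (1 + c) - signedRpow p 1 - signedRpow p c| ≤ ε + C * |c| ^ p)
    {a : ℝ} (ha : 0 < a) (b : ℝ) :
    |signedRpow p (a + b) - signedRpow p a - signedRpow p b| ≤ ε * a ^ p + C * |b| ^ p := by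
  obtain ⟨c, rfl⟩ : ∃ c, b = a * c := ⟨b / a, by field_simp⟩
  have h1 : signedRpow p a = a ^ p * signedRpow p 1 := by
    simpa using signedRpow_mul_of_pos (p := p) ha 1
  calc |signedRpow p (a + a * c) - signedRpow p a - signedRpow p (a * c)|
      = a ^ p * |signedRpow p (1 + c) - signedRpow p 1 - signedRpow p c| := by
        rw [show a + a * c = a * (1 + c) by ring, signedRpow_mul_of_pos ha,
          signedRpow_mul_of_pos ha, h1, ← mul_sub, ← mul_sub, abs_mul,
          abs_of_pos (Real.rpow_pos_of_pos ha p)]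
    _ ≤ a ^ p * (ε + C * |c| ^ p) := by gcongr; exact h c
    _ = ε * a ^ p + C * |a * c| ^ p := by
        rw [abs_mul, abs_of_pos ha, Real.mul_rpow ha.le (abs_nonneg c)]
        ring

theorem exists_abs_signedRpow_add_sub_le (hp : 0 < p) {ε : ℝ} (hε : 0 < ε) :
    ∃ C, 0 ≤ C ∧ ∀ a b,
      |signedRpow p (a + b) - signedRpow p a - signedRpow p b| ≤ ε * |a| ^ p + C * |b| ^ p := by
  obtain ⟨C, hC, h⟩ := exists_abs_signedRpow_one_add_sub_le hp hε
  refine ⟨C, hC, fun a b => ?_⟩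
  rcases lt_trichotomy a 0 with ha | rfl | ha
  · have := abs_signedRpow_add_sub_le_of_pos h (neg_pos.2 ha) (-b)
    rwa [← neg_add, signedRpow_neg, signedRpow_neg, signedRpow_neg, ← abs_of_neg ha, abs_neg,
      show ∀ x y z : ℝ, -x - -y - -z = -(x - y - z) by intros; ring, abs_neg] at this
  · simp only [zero_add, signedRpow_zero, sub_zero, sub_self, abs_zero]
    positivity
  · simpa [abs_of_pos ha] using abs_signedRpow_add_sub_le_of_pos h ha b

end signedRpow

lemma Real.enorm_rpow_eq_ofReal_abs_rpow {r : ℝ} (hr : 0 ≤ r) (t : ℝ) :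
    ‖t‖ₑ ^ r = ENNReal.ofReal (|t| ^ r) := by
  rw [Real.enorm_eq_ofReal_abs, ENNReal.ofReal_rpow_of_nonneg (abs_nonneg t) hr]

section Lebesgue

variable {α : Type*} [MeasurableSpace α] {μ : Measure α}

lemma lintegral_ofReal_abs_rpow_mul_eq_lintegral_withDensity {w : α → ℝ} (hw : Measurable w)
    {r : ℝ} (hr : 0 ≤ r) (g : α → ℝ) :
    ∫⁻ x, ENNReal.ofReal (|g x| ^ r * w x) ∂μ =
      ∫⁻ x, ‖g x‖ₑ ^ r ∂μ.withDensity (fun x => ENNReal.ofReal (w x)) := by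
  rw [lintegral_withDensity_eq_lintegral_mul_non_measurable _ hw.ennreal_ofReal
    (ae_of_all _ fun _ => ENNReal.ofReal_lt_top)]
  congr 1 with x
  rw [Pi.mul_apply, Real.enorm_rpow_eq_ofReal_abs_rpow hr, mul_comm (|g x| ^ r),
    ENNReal.ofReal_mul' (by positivity)]

lemma lintegral_enorm_rpow_le_liminf {f : ℕ → α → ℝ} {g : α → ℝ}
    (hf : ∀ n, AEMeasurable (f n) μ) (hlim : ∀ᵐ x ∂μ, Tendsto (fun n => f n x) atTop (𝓝 (g x)))
    (r : ℝ) :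
    ∫⁻ x, ‖g x‖ₑ ^ r ∂μ ≤ liminf (fun n => ∫⁻ x, ‖f n x‖ₑ ^ r ∂μ) atTop :=
  calc ∫⁻ x, ‖g x‖ₑ ^ r ∂μ = ∫⁻ x, liminf (fun n => ‖f n x‖ₑ ^ r) atTop ∂μ :=
        lintegral_congr_ae <| hlim.mono fun _ hx =>
          (((ENNReal.continuous_rpow_const.comp continuous_enorm).tendsto _).comp hx).liminf_eq.symm
    _ ≤ liminf (fun n => ∫⁻ x, ‖f n x‖ₑ ^ r ∂μ) atTop :=
        lintegral_liminf_le' fun n => (hf n).enorm.pow_const r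

lemma lintegral_enorm_sub_rpow_le {f g : α → ℝ} (hf : AEMeasurable f μ) {r : ℝ} (hr : 0 ≤ r) :
    ∫⁻ x, ‖f x - g x‖ₑ ^ r ∂μ ≤ 2 ^ r * (∫⁻ x, ‖f x‖ₑ ^ r ∂μ + ∫⁻ x, ‖g x‖ₑ ^ r ∂μ) :=
  calc ∫⁻ x, ‖f x - g x‖ₑ ^ r ∂μ ≤ ∫⁻ x, 2 ^ r * (‖f x‖ₑ ^ r + ‖g x‖ₑ ^ r) ∂μ :=
        lintegral_mono fun x => (ENNReal.rpow_le_rpow enorm_sub_le hr).trans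
          (ENNReal.add_rpow_le_two_rpow_mul_rpow_add_rpow _ _ hr)
    _ = 2 ^ r * (∫⁻ x, ‖f x‖ₑ ^ r ∂μ + ∫⁻ x, ‖g x‖ₑ ^ r ∂μ) := by
        rw [lintegral_const_mul' _ _ (ENNReal.rpow_ne_top_of_nonneg hr ENNReal.ofNat_ne_top),
          lintegral_add_left' (hf.enorm.pow_const r)]

lemma limsup_lintegral_rpow_le_two_rpow_mul {F G : ℕ → α → ℝ≥0∞} {b : α → ℝ≥0∞} {q : ℝ}
    {K : ℝ≥0∞} (hq : 0 < q) (hF : ∀ n, AEMeasurable (F n) μ) (hG : ∀ n, AEMeasurable (G n) μ)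
    (hGK : ∀ n, ∫⁻ x, G n x ^ q ∂μ ≤ K) (hFG : ∀ n x, F n x ≤ G n x + b x)
    (hb : ∫⁻ x, b x ^ q ∂μ ≠ ∞) (hF0 : ∀ᵐ x ∂μ, Tendsto (fun n => F n x) atTop (𝓝 0)) :
    limsup (fun n => ∫⁻ x, F n x ^ q ∂μ) atTop ≤ 2 ^ q * K := by
  have hm : ∀ n, AEMeasurable (fun x => (F n x - G n x) ^ q) μ := fun n =>
    ((hF n).sub (hG n)).pow_const q
  have htop : (2 : ℝ≥0∞) ^ q ≠ ∞ := ENNReal.rpow_ne_top_of_nonneg hq.le ENNReal.ofNat_ne_top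
  -- the excess of `F n` over `G n` is dominated by `b` and tends to zero
  have hexcess : Tendsto (fun n => 2 ^ q * ∫⁻ x, (F n x - G n x) ^ q ∂μ) atTop (𝓝 0) := by
    have hlim : ∀ᵐ x ∂μ, Tendsto (fun n => (F n x - G n x) ^ q) atTop (𝓝 0) :=
      hF0.mono fun x hx => by
        have : Tendsto (fun n => F n x - G n x) atTop (𝓝 0) :=
          tendsto_of_tendsto_of_tendsto_of_le_of_le tendsto_const_nhds hx (fun _ => zero_le)
            fun n => tsub_le_self
        simpa [hq, Function.comp_def] using
          ((ENNReal.continuous_rpow_const (y := q)).tendsto 0).comp this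
    simpa using ENNReal.Tendsto.const_mul (tendsto_lintegral_of_dominated_convergence'
      (fun x => b x ^ q) hm
      (fun n => ae_of_all _ fun x => ENNReal.rpow_le_rpow (tsub_le_iff_left.2 (hFG n x)) hq.le)
      hb hlim) (Or.inr htop)
  have hpt : ∀ n, ∫⁻ x, F n x ^ q ∂μ ≤ 2 ^ q * ∫⁻ x, (F n x - G n x) ^ q ∂μ + 2 ^ q * K :=
    fun n =>
    calc ∫⁻ x, F n x ^ q ∂μ ≤ ∫⁻ x, 2 ^ q * ((F n x - G n x) ^ q + G n x ^ q) ∂μ :=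
          lintegral_mono fun x => (ENNReal.rpow_le_rpow le_tsub_add hq.le).trans
            (ENNReal.add_rpow_le_two_rpow_mul_rpow_add_rpow _ _ hq.le)
      _ ≤ _ := by
          rw [lintegral_const_mul' _ _ htop, lintegral_add_left' (hm n), mul_add]
          gcongr
          exact hGK n
  calc limsup (fun n => ∫⁻ x, F n x ^ q ∂μ) atTop
      ≤ limsup (fun n => 2 ^ q * ∫⁻ x, (F n x - G n x) ^ q ∂μ + 2 ^ q * K) atTop :=
        limsup_le_limsup (Eventually.of_forall hpt)
    _ = 2 ^ q * K := by simpa using (hexcess.add_const (2 ^ q * K)).limsup_eq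

end Lebesgue

section BrezisLieb

variable {α : Type*} [MeasurableSpace α] {μ : Measure α} {p P : ℝ} {f : ℕ → α → ℝ} {g : α → ℝ}

lemma limsup_lintegral_enorm_signedRpow_sub_sub_le (hp : 0 < p) (hP : 0 < P)
    (hf : ∀ n, AEMeasurable (f n) μ) (hlim : ∀ᵐ x ∂μ, Tendsto (fun n => f n x) atTop (𝓝 (g x)))
    (hg : ∫⁻ x, ‖g x‖ₑ ^ P ∂μ ≠ ∞) {K : ℝ≥0∞} (hK : ∀ n, ∫⁻ x, ‖f n x - g x‖ₑ ^ P ∂μ ≤ K)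
    {ε : ℝ} (hε : 0 < ε) :
    limsup (fun n => ∫⁻ x, ‖signedRpow p (f n x) - signedRpow p (f n x - g x)
      - signedRpow p (g x)‖ₑ ^ (P / p) ∂μ) atTop ≤
        2 ^ (P / p) * (ENNReal.ofReal ε ^ (P / p) * K) := by
  set q := P / p
  have hq : 0 < q := div_pos hP hp
  have hpow : ∀ c a : ℝ≥0∞, (c * a ^ p) ^ q = c ^ q * a ^ P := fun c a => by
    rw [ENNReal.mul_rpow_of_nonneg _ _ hq.le, ← ENNReal.rpow_mul, mul_div_cancel₀ P hp.ne']
  have hgm : AEMeasurable g μ := aemeasurable_of_tendsto_metrizable_ae' hf hlim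
  have hφ := continuous_signedRpow hp
  obtain ⟨C, hC, hineq⟩ := exists_abs_signedRpow_add_sub_le hp hε
  refine limsup_lintegral_rpow_le_two_rpow_mul
    (G := fun n x => ENNReal.ofReal ε * ‖f n x - g x‖ₑ ^ p)
    (b := fun x => ENNReal.ofReal C * ‖g x‖ₑ ^ p) hq (fun n => ?_) (fun n => ?_) (fun n => ?_)
    (fun n x => ?_) ?_ ?_
  · have := hφ.measurable
    fun_prop
  · fun_prop
  · simp only [hpow]
    rw [lintegral_const_mul' _ _ (by simp [hq.le])]
    gcongr
    exact hK n
  · have := hineq (f n x - g x) (g x)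
    rw [sub_add_cancel] at this
    rw [Real.enorm_rpow_eq_ofReal_abs_rpow hp.le, Real.enorm_rpow_eq_ofReal_abs_rpow hp.le,
      ← ENNReal.ofReal_mul hε.le, ← ENNReal.ofReal_mul hC, ← ENNReal.ofReal_add (by positivity)
      (by positivity), Real.enorm_eq_ofReal_abs]
    exact ENNReal.ofReal_le_ofReal this
  · simp only [hpow]
    rw [lintegral_const_mul' _ _ (by simp [hq.le])]
    exact ENNReal.mul_ne_top (by simp [hq.le]) hg
  · filter_upwards [hlim] with x hx
    have := ((hφ.tendsto _).comp hx).sub ((hφ.tendsto _).comp (hx.sub_const (g x))) |>.sub_const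
      (signedRpow p (g x))
    simpa [Function.comp_def] using (continuous_enorm.tendsto _).comp this

theorem tendsto_lintegral_enorm_signedRpow_sub_sub (hp : 0 < p) (hP : 0 < P)
    (hf : ∀ n, AEMeasurable (f n) μ) (hbdd : ⨆ n, ∫⁻ x, ‖f n x‖ₑ ^ P ∂μ < ∞)
    (hlim : ∀ᵐ x ∂μ, Tendsto (fun n => f n x) atTop (𝓝 (g x))) :
    Tendsto (fun n => ∫⁻ x, ‖signedRpow p (f n x) - signedRpow p (f n x - g x)
      - signedRpow p (g x)‖ₑ ^ (P / p) ∂μ) atTop (𝓝 0) := by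
  set M := ⨆ n, ∫⁻ x, ‖f n x‖ₑ ^ P ∂μ
  have hgM : ∫⁻ x, ‖g x‖ₑ ^ P ∂μ ≤ M :=
    (lintegral_enorm_rpow_le_liminf hf hlim P).trans (le_trans liminf_le_limsup limsup_le_iSup)
  have hK (n : ℕ) : ∫⁻ x, ‖f n x - g x‖ₑ ^ P ∂μ ≤ 2 ^ P * (M + M) :=
    (lintegral_enorm_sub_rpow_le (hf n) hP.le).trans
      (by gcongr; exact le_iSup_iff.2 fun _ h => h n)
  have htop {r : ℝ} (hr : 0 ≤ r) : (2 : ℝ≥0∞) ^ r ≠ ∞ :=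
    ENNReal.rpow_ne_top_of_nonneg hr ENNReal.ofNat_ne_top
  have hKtop : 2 ^ P * (M + M) ≠ ∞ :=
    ENNReal.mul_ne_top (htop hP.le) (ENNReal.add_ne_top.2 ⟨hbdd.ne, hbdd.ne⟩)
  have hq : 0 < P / p := div_pos hP hp
  have hsmall : Tendsto
      (fun ε : ℝ => 2 ^ (P / p) * (ENNReal.ofReal ε ^ (P / p) * (2 ^ P * (M + M))))
      (𝓝[>] 0) (𝓝 0) := by
    have h0 : Tendsto (fun ε : ℝ => ENNReal.ofReal ε ^ (P / p)) (𝓝 0) (𝓝 0) := by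
      simpa [hq, Function.comp_def] using
        ((ENNReal.continuous_rpow_const (y := P / p)).comp ENNReal.continuous_ofReal).tendsto 0
    simpa using (ENNReal.Tendsto.const_mul (ENNReal.Tendsto.mul_const h0 (Or.inr hKtop))
      (Or.inr (htop hq.le))).mono_left nhdsWithin_le_nhds
  refine tendsto_of_le_liminf_of_limsup_le zero_le (ge_of_tendsto hsmall ?_)
  exact eventually_nhdsWithin_of_forall fun ε hε =>
    limsup_lintegral_enorm_signedRpow_sub_sub_le hp hP hf hlim (hgM.trans_lt hbdd).ne hK hε

end BrezisLieb

theorem stmt_13_general (N : ℕ) (hN : 3 ≤ N) (s σ : ℝ)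
    (hs2 : s < 2) (hσ : 1 < σ)
    (u : ℕ → EuclideanSpace ℝ (Fin N) → ℝ) (hu : ∀ n, Measurable (u n))
    (u₀ : EuclideanSpace ℝ (Fin N) → ℝ)
    (hbdd : (⨆ n, ∫⁻ x,
        ENNReal.ofReal (|u n x| ^ (2 * ((N : ℝ) - s) / ((N : ℝ) - 2)) * ‖x‖ ^ (-s))) < ⊤)
    (hae : ∀ᵐ (x : EuclideanSpace ℝ (Fin N)) ∂volume,
      Tendsto (fun n => u n x) atTop (nhds (u₀ x))) :
    Tendsto (fun n => ∫⁻ x, ENNReal.ofReal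
        (|Real.sign (u n x) * |u n x| ^ (σ - 1)
            - Real.sign (u n x - u₀ x) * |u n x - u₀ x| ^ (σ - 1)
            - Real.sign (u₀ x) * |u₀ x| ^ (σ - 1)|
              ^ (2 * ((N : ℝ) - s) / ((N : ℝ) - 2) / (σ - 1))
          * ‖x‖ ^ (-s)))
      atTop (nhds 0) := by
  have hP : 0 < 2 * ((N : ℝ) - s) / ((N : ℝ) - 2) := by
    have : (3 : ℝ) ≤ N := by exact_mod_cast hN
    apply div_pos <;> linarith
  have hp : 0 < σ - 1 := sub_pos.2 hσ
  have hw : Measurable fun x : EuclideanSpace ℝ (Fin N) => ‖x‖ ^ (-s) := by fun_prop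
  simp only [lintegral_ofReal_abs_rpow_mul_eq_lintegral_withDensity hw hP.le,
    lintegral_ofReal_abs_rpow_mul_eq_lintegral_withDensity hw (div_pos hP hp).le] at hbdd ⊢
  exact tendsto_lintegral_enorm_signedRpow_sub_sub hp hP (fun n => (hu n).aemeasurable) hbdd
    ((withDensity_absolutelyContinuous _ _).ae_le hae)

/-- Corollary 4.1: Brezis–Lieb type convergence of the nonlinearities
`|u|^{σ-2}u` in the weighted Lebesgue space. -/
theorem stmt_13 (N : ℕ) (hN : 3 ≤ N) (s σ : ℝ)
    (hs0 : 0 ≤ s) (hs2 : s < 2) (hσ : 1 < σ)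
    (u : ℕ → EuclideanSpace ℝ (Fin N) → ℝ) (hu : ∀ n, Measurable (u n))
    (u₀ : EuclideanSpace ℝ (Fin N) → ℝ)
    (hbdd : (⨆ n, ∫⁻ x,
        ENNReal.ofReal (|u n x| ^ (2 * ((N : ℝ) - s) / ((N : ℝ) - 2)) * ‖x‖ ^ (-s))) < ⊤)
    (hae : ∀ᵐ (x : EuclideanSpace ℝ (Fin N)) ∂volume,
      Tendsto (fun n => u n x) atTop (nhds (u₀ x))) :
    Tendsto (fun n => ∫⁻ x, ENNReal.ofReal
        (|Real.sign (u n x) * |u n x| ^ (σ - 1)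
            - Real.sign (u n x - u₀ x) * |u n x - u₀ x| ^ (σ - 1)
            - Real.sign (u₀ x) * |u₀ x| ^ (σ - 1)|
              ^ (2 * ((N : ℝ) - s) / ((N : ℝ) - 2) / (σ - 1))
          * ‖x‖ ^ (-s)))
      atTop (nhds 0) :=
  stmt_13_general N hN s σ hs2 hσ u hu u₀ hbdd hae
end

section
/- (Lemma 4.4.) Let N ≥ 3 be an integer, let 0 ≤ s₂ < 2, and let α > 1, β > 1 with α + β = 2^*(s₂). Let (u_n) and (v_n) be sequences of measurable functions ℝ^N → ℝ with sup_n ∫_{ℝ^N} ( |u_n(x)|^{2^*(s₂)} + |v_n(x)|^{2^*(s₂)} ) ‖x‖^{−s₂} dx < ∞, and suppose u_n → u and v_n → v almost everywhere on ℝ^N. Then ∫_{ℝ^N} | |u_n|^{α} − |u_n − u|^{α} − |u|^{α} |^{2^*(s₂)/α}(x) ‖x‖^{−s₂} dx → 0 and ∫_{ℝ^N} | |v_n|^{β} − |v_n − v|^{β} − |v|^{β} |^{2^*(s₂)/β}(x) ‖x‖^{−s₂} dx → 0 as n → ∞. -/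
/-!
Write `u n = (u n - u₀) + u₀`. For `α > 1` the map `t ↦ |t| ^ α` satisfies the Brezis–Lieb
estimate `||a + b| ^ α - |a| ^ α - |b| ^ α| ≤ ε |a| ^ α + C_ε |b| ^ α` (mean value theorem plus
Young's inequality). Raised to the power `p / α`, with `p = 2^*(s₂)`, this bounds the integrand by
`ε |u n - u₀| ^ p + C_ε |u₀| ^ p`, where `∫ |u n - u₀| ^ p` is bounded and `|u₀| ^ p` is integrable
by Fatou. The part of the integrand exceeding `ε |u n - u₀| ^ p` tends to `0` a.e. and is dominated
by `C_ε |u₀| ^ p`, so its integral vanishes in the limit; hence the limsup of the integrals is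
`O(ε)` for every `ε > 0`. The weight `‖x‖ ^ (-s₂)` is absorbed into the measure.
-/

open MeasureTheory Filter Topology
open scoped ENNReal NNReal

namespace Real

lemma add_rpow_le_two_rpow_mul {a b p : ℝ} (ha : 0 ≤ a) (hb : 0 ≤ b) (hp : 0 ≤ p) :
    (a + b) ^ p ≤ 2 ^ p * (a ^ p + b ^ p) := by
  wlog hab : a ≤ b generalizing a b
  · rw [add_comm a, add_comm (a ^ p)]
    exact this hb ha (le_of_not_ge hab)
  calc (a + b) ^ p ≤ (2 * b) ^ p := by gcongr; linarith
    _ = 2 ^ p * b ^ p := mul_rpow zero_le_two hb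
    _ ≤ 2 ^ p * (a ^ p + b ^ p) := by gcongr; exact le_add_of_nonneg_left (by positivity)

lemma abs_rpow_sub_rpow_le {x y α : ℝ} (hx : 0 ≤ x) (hy : 0 ≤ y) (hα : 1 ≤ α) :
    |x ^ α - y ^ α| ≤ α * max x y ^ (α - 1) * |x - y| := by
  have hderiv : ∀ t ∈ Set.Icc 0 (max x y),
      HasDerivWithinAt (fun t : ℝ => t ^ α) (α * t ^ (α - 1)) (Set.Icc 0 (max x y)) t :=
    fun t _ => (hasDerivAt_rpow_const (Or.inr hα)).hasDerivWithinAt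
  have hbound : ∀ t ∈ Set.Icc 0 (max x y), ‖α * t ^ (α - 1)‖ ≤ α * max x y ^ (α - 1) := by
    rintro t ⟨ht0, htM⟩
    rw [norm_of_nonneg (by positivity)]
    gcongr
  simpa only [norm_eq_abs] using
    (convex_Icc 0 (max x y)).norm_image_sub_le_of_norm_hasDerivWithin_le hderiv hbound
      ⟨hy, le_max_right x y⟩ ⟨hx, le_max_left x y⟩

lemma rpow_sub_one_mul_self {a α : ℝ} (ha : 0 ≤ a) (hα : 1 < α) : a ^ (α - 1) * a = a ^ α := by
  rw [← rpow_add_one' ha (by linarith), sub_add_cancel]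

lemma rpow_sub_one_mul_le {a b δ α : ℝ} (ha : 0 ≤ a) (hb : 0 ≤ b) (hδ : 0 < δ) (hα : 1 < α) :
    a ^ (α - 1) * b ≤ δ * a ^ α + δ ^ (1 - α) * b ^ α := by
  rcases le_or_gt b (δ * a) with hba | hab
  · calc a ^ (α - 1) * b ≤ a ^ (α - 1) * (δ * a) := by gcongr
      _ = δ * a ^ α := by rw [mul_left_comm, rpow_sub_one_mul_self ha hα]
      _ ≤ δ * a ^ α + δ ^ (1 - α) * b ^ α := le_add_of_nonneg_right (by positivity)
  · have hab' : a ≤ b / δ := (le_div_iff₀ hδ).2 (by linarith)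
    calc a ^ (α - 1) * b ≤ (b / δ) ^ (α - 1) * b := by gcongr
      _ = δ ^ (1 - α) * b ^ α := by
        rw [div_rpow hb hδ.le, div_eq_mul_inv, ← rpow_neg hδ.le, neg_sub, mul_right_comm,
          rpow_sub_one_mul_self hb hα, mul_comm]
      _ ≤ δ * a ^ α + δ ^ (1 - α) * b ^ α := le_add_of_nonneg_left (by positivity)

lemma abs_abs_add_rpow_sub_abs_rpow_le {α δ : ℝ} (hα : 1 < α) (hδ : 0 < δ) (a b : ℝ) :
    |(|a + b| ^ α - |a| ^ α)| ≤ α * 2 ^ (α - 1) * δ * |a| ^ α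
      + α * 2 ^ (α - 1) * (δ ^ (1 - α) + 1) * |b| ^ α := by
  have hmax : max |a + b| |a| ≤ |a| + |b| :=
    max_le (abs_add_le a b) (le_add_of_nonneg_right (abs_nonneg b))
  have hdiff : |(|a + b| - |a|)| ≤ |b| := by
    simpa using abs_abs_sub_abs_le_abs_sub (a + b) a
  calc |(|a + b| ^ α - |a| ^ α)|
      ≤ α * max |a + b| |a| ^ (α - 1) * |(|a + b| - |a|)| :=
        abs_rpow_sub_rpow_le (abs_nonneg _) (abs_nonneg _) hα.le
    _ ≤ α * (2 ^ (α - 1) * (|a| ^ (α - 1) + |b| ^ (α - 1))) * |b| := by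
        gcongr
        exact (rpow_le_rpow (by positivity) hmax (by linarith)).trans
          (add_rpow_le_two_rpow_mul (abs_nonneg a) (abs_nonneg b) (by linarith))
    _ = α * 2 ^ (α - 1) * (|a| ^ (α - 1) * |b| + |b| ^ (α - 1) * |b|) := by ring
    _ ≤ α * 2 ^ (α - 1) * (δ * |a| ^ α + δ ^ (1 - α) * |b| ^ α + |b| ^ α) := by
        rw [rpow_sub_one_mul_self (abs_nonneg b) hα]
        gcongr
        exact rpow_sub_one_mul_le (abs_nonneg a) (abs_nonneg b) hδ hα
    _ = _ := by ring

-- The Brezis–Lieb condition for `j = |·| ^ α`.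
lemma exists_abs_abs_add_rpow_sub_le {α ε : ℝ} (hα : 1 < α) (hε : 0 < ε) :
    ∃ C, ∀ a b : ℝ, |(|a + b| ^ α - |a| ^ α - |b| ^ α)| ≤ ε * |a| ^ α + C * |b| ^ α := by
  have hK : 0 < α * 2 ^ (α - 1) := by positivity
  set δ := ε / (α * 2 ^ (α - 1))
  refine ⟨α * 2 ^ (α - 1) * (δ ^ (1 - α) + 1) + 1, fun a b => ?_⟩
  have h := abs_abs_add_rpow_sub_abs_rpow_le hα (div_pos hε hK) a b
  rw [mul_div_cancel₀ ε hK.ne'] at h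
  calc |(|a + b| ^ α - |a| ^ α - |b| ^ α)| ≤ |(|a + b| ^ α - |a| ^ α)| + |b| ^ α := by
        simpa only [abs_of_nonneg (rpow_nonneg (abs_nonneg b) α)]
          using abs_sub (|a + b| ^ α - |a| ^ α) (|b| ^ α)
    _ ≤ _ := by linarith

lemma exists_abs_rpow_sub_rpow_sub_rpow_rpow_le {α p ε : ℝ} (hα : 1 < α) (hp : 0 < p)
    (hε : 0 < ε) : ∃ C, ∀ a b : ℝ,
      |(|a| ^ α - |a - b| ^ α - |b| ^ α)| ^ (p / α) ≤ ε * |a - b| ^ p + C * |b| ^ p := by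
  set q := p / α
  have hq : 0 < q := div_pos hp (by linarith)
  have hpow : ∀ t : ℝ, (|t| ^ α) ^ q = |t| ^ p := fun t => by
    rw [← rpow_mul (abs_nonneg t), mul_div_cancel₀ p (by linarith)]
  set η := (ε / 2 ^ q) ^ q⁻¹
  have hη : η ^ q = ε / 2 ^ q := rpow_inv_rpow (by positivity) hq.ne'
  obtain ⟨C, hC⟩ := exists_abs_abs_add_rpow_sub_le hα (show 0 < η by positivity)
  refine ⟨2 ^ q * |C| ^ q, fun a b => ?_⟩
  have hab := hC (a - b) b
  rw [sub_add_cancel] at hab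
  calc |(|a| ^ α - |a - b| ^ α - |b| ^ α)| ^ q
      ≤ (η * |a - b| ^ α + |C| * |b| ^ α) ^ q := by
        gcongr
        exact hab.trans (by gcongr; exact le_abs_self C)
    _ ≤ 2 ^ q * ((η * |a - b| ^ α) ^ q + (|C| * |b| ^ α) ^ q) :=
        add_rpow_le_two_rpow_mul (by positivity) (by positivity) hq.le
    _ = ε * |a - b| ^ p + 2 ^ q * |C| ^ q * |b| ^ p := by
        rw [mul_rpow (by positivity) (by positivity), mul_rpow (by positivity) (by positivity),
          hpow, hpow, hη]
        field_simp

end Real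

section BrezisLieb

variable {X : Type*} [MeasurableSpace X] {μ : Measure X}

lemma lintegral_le_of_ae_tendsto {f : ℕ → X → ℝ≥0∞} {g : X → ℝ≥0∞} {S : ℝ≥0∞}
    (hf : ∀ n, AEMeasurable (f n) μ) (hlim : ∀ᵐ x ∂μ, Tendsto (fun n => f n x) atTop (𝓝 (g x)))
    (hS : ∀ n, ∫⁻ x, f n x ∂μ ≤ S) : ∫⁻ x, g x ∂μ ≤ S :=
  calc ∫⁻ x, g x ∂μ = ∫⁻ x, liminf (fun n => f n x) atTop ∂μ :=
        lintegral_congr_ae (hlim.mono fun _ hx => hx.liminf_eq.symm)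
    _ ≤ liminf (fun n => ∫⁻ x, f n x ∂μ) atTop := lintegral_liminf_le' hf
    _ ≤ S := liminf_le_of_frequently_le' (Frequently.of_forall hS)

lemma lintegral_ofReal_abs_sub_rpow_le {f g : X → ℝ} {p : ℝ} (hp : 0 ≤ p)
    (hf : AEMeasurable f μ) : ∫⁻ x, ENNReal.ofReal (|f x - g x| ^ p) ∂μ
      ≤ ENNReal.ofReal (2 ^ p) *
        (∫⁻ x, ENNReal.ofReal (|f x| ^ p) ∂μ + ∫⁻ x, ENNReal.ofReal (|g x| ^ p) ∂μ) :=
  calc ∫⁻ x, ENNReal.ofReal (|f x - g x| ^ p) ∂μ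
      ≤ ∫⁻ x, ENNReal.ofReal (2 ^ p) *
          (ENNReal.ofReal (|f x| ^ p) + ENNReal.ofReal (|g x| ^ p)) ∂μ := lintegral_mono fun x => by
        rw [← ENNReal.ofReal_add (by positivity) (by positivity),
          ← ENNReal.ofReal_mul (by positivity)]
        exact ENNReal.ofReal_le_ofReal ((Real.rpow_le_rpow (abs_nonneg _) (abs_sub _ _) hp).trans
          (Real.add_rpow_le_two_rpow_mul (abs_nonneg _) (abs_nonneg _) hp))
    _ = _ := by
        rw [lintegral_const_mul' _ _ ENNReal.ofReal_ne_top, lintegral_add_left' (by fun_prop)]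

theorem tendsto_lintegral_zero_of_le_mul_add_mul {Φ Γ : ℕ → X → ℝ≥0∞} {H : X → ℝ≥0∞}
    {M : ℝ≥0∞} (hΦ : ∀ n, AEMeasurable (Φ n) μ) (hΓ : ∀ n, AEMeasurable (Γ n) μ)
    (hΦlim : ∀ᵐ x ∂μ, Tendsto (fun n => Φ n x) atTop (𝓝 0))
    (hΓM : ∀ n, ∫⁻ x, Γ n x ∂μ ≤ M) (hM : M ≠ ∞) (hH : ∫⁻ x, H x ∂μ ≠ ∞)
    (hle : ∀ ε : ℝ≥0, 0 < ε → ∃ C : ℝ≥0, ∀ n x, Φ n x ≤ ε * Γ n x + C * H x) :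
    Tendsto (fun n => ∫⁻ x, Φ n x ∂μ) atTop (𝓝 0) := by
  have hlimsup : ∀ ε : ℝ≥0, 0 < ε → limsup (fun n => ∫⁻ x, Φ n x ∂μ) atTop ≤ ε * M := by
    intro ε hε
    obtain ⟨C, hC⟩ := hle ε hε
    -- The excess of `Φ n` over `ε Γ n` is dominated by `C H` and tends to `0`.
    set W : ℕ → X → ℝ≥0∞ := fun n x => Φ n x - ε * Γ n x
    have hW : ∀ n, AEMeasurable (W n) μ := fun n => (hΦ n).sub ((hΓ n).const_mul _)
    have hWlim : Tendsto (fun n => ∫⁻ x, W n x ∂μ) atTop (𝓝 0) := by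
      simpa using tendsto_lintegral_of_dominated_convergence' (fun x => C * H x) hW
        (fun n => ae_of_all _ fun x => tsub_le_iff_right.2 ((hC n x).trans_eq (add_comm _ _)))
        (by rw [lintegral_const_mul' _ _ ENNReal.coe_ne_top]
            exact ENNReal.mul_ne_top ENNReal.coe_ne_top hH)
        (hΦlim.mono fun x hx => tendsto_of_tendsto_of_tendsto_of_le_of_le tendsto_const_nhds hx
          (fun n => zero_le) fun n => tsub_le_self)
    have hΦW : ∀ n, ∫⁻ x, Φ n x ∂μ ≤ ∫⁻ x, W n x ∂μ + ε * M := fun n =>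
      calc ∫⁻ x, Φ n x ∂μ ≤ ∫⁻ x, W n x + ε * Γ n x ∂μ := lintegral_mono fun x => le_tsub_add
        _ = ∫⁻ x, W n x ∂μ + ε * ∫⁻ x, Γ n x ∂μ := by
          rw [lintegral_add_left' (hW n), lintegral_const_mul' _ _ ENNReal.coe_ne_top]
        _ ≤ ∫⁻ x, W n x ∂μ + ε * M := by gcongr; exact hΓM n
    calc limsup (fun n => ∫⁻ x, Φ n x ∂μ) atTop
        ≤ limsup (fun n => ∫⁻ x, W n x ∂μ + ε * M) atTop := limsup_le_limsup (.of_forall hΦW)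
      _ = ε * M := by simpa using (hWlim.add_const (ε * M : ℝ≥0∞)).limsup_eq
  have hεM : Tendsto (fun ε : ℝ≥0 => (ε : ℝ≥0∞) * M) (𝓝[>] 0) (𝓝 0) := by
    simpa using ENNReal.Tendsto.mul_const
      ((ENNReal.tendsto_coe.2 tendsto_id).mono_left (nhdsWithin_le_nhds (a := (0 : ℝ≥0))))
      (Or.inr hM)
  exact tendsto_of_le_liminf_of_limsup_le zero_le
    (ge_of_tendsto hεM (eventually_nhdsWithin_of_forall hlimsup))

theorem tendsto_lintegral_abs_rpow_sub_rpow_sub_rpow {u : ℕ → X → ℝ} {u₀ : X → ℝ} {α p : ℝ}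
    {S : ℝ≥0∞} (hα : 1 < α) (hp : 0 < p) (hu : ∀ n, AEMeasurable (u n) μ)
    (hlim : ∀ᵐ x ∂μ, Tendsto (fun n => u n x) atTop (𝓝 (u₀ x)))
    (hS : ∀ n, ∫⁻ x, ENNReal.ofReal (|u n x| ^ p) ∂μ ≤ S) (hS_ne : S ≠ ∞) :
    Tendsto (fun n => ∫⁻ x, ENNReal.ofReal
      (|(|u n x| ^ α - |u n x - u₀ x| ^ α - |u₀ x| ^ α)| ^ (p / α)) ∂μ) atTop (𝓝 0) := by
  have hu₀ : AEMeasurable u₀ μ := aemeasurable_of_tendsto_metrizable_ae atTop hu hlim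
  have hα0 : 0 ≤ α := by linarith
  have hq0 : 0 ≤ p / α := by positivity
  have hpow : Continuous fun t : ℝ => ENNReal.ofReal (|t| ^ p) :=
    ENNReal.continuous_ofReal.comp (by fun_prop (disch := exact hp.le))
  have hu₀S : ∫⁻ x, ENNReal.ofReal (|u₀ x| ^ p) ∂μ ≤ S :=
    lintegral_le_of_ae_tendsto (fun n => hpow.measurable.comp_aemeasurable (hu n))
      (hlim.mono fun x hx => (hpow.tendsto _).comp hx) hS
  have hdiff : ∀ n, ∫⁻ x, ENNReal.ofReal (|u n x - u₀ x| ^ p) ∂μ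
      ≤ ENNReal.ofReal (2 ^ p) * (S + S) := fun n =>
    (lintegral_ofReal_abs_sub_rpow_le hp.le (hu n)).trans (by gcongr; exact hS n)
  refine tendsto_lintegral_zero_of_le_mul_add_mul (by fun_prop) (by fun_prop) ?_ hdiff
    (ENNReal.mul_ne_top ENNReal.ofReal_ne_top (ENNReal.add_ne_top.2 ⟨hS_ne, hS_ne⟩))
    (hu₀S.trans_lt hS_ne.lt_top).ne fun ε hε => ?_
  · filter_upwards [hlim] with x hx
    have hcont : Continuous fun s : ℝ => ENNReal.ofReal
        (|(|s| ^ α - |s - u₀ x| ^ α - |u₀ x| ^ α)| ^ (p / α)) :=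
      ENNReal.continuous_ofReal.comp (by fun_prop (disch := assumption))
    simpa [Function.comp_def, Real.zero_rpow (show α ≠ 0 by linarith),
      Real.zero_rpow (show p / α ≠ 0 by positivity)] using (hcont.tendsto (u₀ x)).comp hx
  · obtain ⟨C, hC⟩ := Real.exists_abs_rpow_sub_rpow_sub_rpow_rpow_le hα hp hε
    refine ⟨C.toNNReal, fun n x => ?_⟩
    calc ENNReal.ofReal (|(|u n x| ^ α - |u n x - u₀ x| ^ α - |u₀ x| ^ α)| ^ (p / α))
        ≤ ENNReal.ofReal (ε * |u n x - u₀ x| ^ p) + ENNReal.ofReal (C * |u₀ x| ^ p) :=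
          (ENNReal.ofReal_le_ofReal (hC _ _)).trans ENNReal.ofReal_add_le
      _ = ε * ENNReal.ofReal (|u n x - u₀ x| ^ p)
            + C.toNNReal * ENNReal.ofReal (|u₀ x| ^ p) := by
          rw [ENNReal.ofReal_mul (NNReal.coe_nonneg ε), ENNReal.ofReal_mul' (by positivity),
            ENNReal.ofReal_coe_nnreal]
          rfl

lemma lintegral_withDensity_ofReal {w : X → ℝ} (hw : Measurable w) (hw0 : ∀ x, 0 ≤ w x)
    (f : X → ℝ) : ∫⁻ x, ENNReal.ofReal (f x) ∂μ.withDensity (fun x => ENNReal.ofReal (w x))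
      = ∫⁻ x, ENNReal.ofReal (f x * w x) ∂μ := by
  rw [lintegral_withDensity_eq_lintegral_mul_non_measurable _ hw.ennreal_ofReal
    (ae_of_all _ fun _ => ENNReal.ofReal_lt_top)]
  exact lintegral_congr fun x => by rw [Pi.mul_apply, ENNReal.ofReal_mul' (hw0 x), mul_comm]

theorem tendsto_lintegral_abs_rpow_sub_rpow_sub_rpow_mul {u : ℕ → X → ℝ} {u₀ w : X → ℝ}
    {α p : ℝ} {S : ℝ≥0∞} (hα : 1 < α) (hp : 0 < p) (hu : ∀ n, AEMeasurable (u n) μ)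
    (hlim : ∀ᵐ x ∂μ, Tendsto (fun n => u n x) atTop (𝓝 (u₀ x)))
    (hw : Measurable w) (hw0 : ∀ x, 0 ≤ w x)
    (hS : ∀ n, ∫⁻ x, ENNReal.ofReal (|u n x| ^ p * w x) ∂μ ≤ S) (hS_ne : S ≠ ∞) :
    Tendsto (fun n => ∫⁻ x, ENNReal.ofReal
      (|(|u n x| ^ α - |u n x - u₀ x| ^ α - |u₀ x| ^ α)| ^ (p / α) * w x) ∂μ) atTop (𝓝 0) := by
  simp_rw [← lintegral_withDensity_ofReal hw hw0] at hS ⊢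
  have hac := withDensity_absolutelyContinuous μ fun x => ENNReal.ofReal (w x)
  exact tendsto_lintegral_abs_rpow_sub_rpow_sub_rpow hα hp (fun n => (hu n).mono_ac hac)
    (hac.ae_le hlim) hS hS_ne

end BrezisLieb

theorem stmt_14_general (N : ℕ) (hN : 3 ≤ N) (s₂ α β : ℝ)
    (hs₂2 : s₂ < 2) (hα : 1 < α) (hβ : 1 < β)
    (u v : ℕ → EuclideanSpace ℝ (Fin N) → ℝ)
    (hu : ∀ n, Measurable (u n)) (hv : ∀ n, Measurable (v n))
    (u₀ v₀ : EuclideanSpace ℝ (Fin N) → ℝ)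
    (hbdd : (⨆ n, ∫⁻ x, ENNReal.ofReal
        ((|u n x| ^ (2 * ((N : ℝ) - s₂) / ((N : ℝ) - 2))
          + |v n x| ^ (2 * ((N : ℝ) - s₂) / ((N : ℝ) - 2))) * ‖x‖ ^ (-s₂))) < ⊤)
    (haeu : ∀ᵐ (x : EuclideanSpace ℝ (Fin N)) ∂volume,
      Tendsto (fun n => u n x) atTop (nhds (u₀ x)))
    (haev : ∀ᵐ (x : EuclideanSpace ℝ (Fin N)) ∂volume,
      Tendsto (fun n => v n x) atTop (nhds (v₀ x))) :
    Tendsto (fun n => ∫⁻ x, ENNReal.ofReal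
        (abs (|u n x| ^ α - |u n x - u₀ x| ^ α - |u₀ x| ^ α)
            ^ (2 * ((N : ℝ) - s₂) / ((N : ℝ) - 2) / α) * ‖x‖ ^ (-s₂)))
      atTop (nhds 0) ∧
    Tendsto (fun n => ∫⁻ x, ENNReal.ofReal
        (abs (|v n x| ^ β - |v n x - v₀ x| ^ β - |v₀ x| ^ β)
            ^ (2 * ((N : ℝ) - s₂) / ((N : ℝ) - 2) / β) * ‖x‖ ^ (-s₂)))
      atTop (nhds 0) := by
  set p : ℝ := 2 * ((N : ℝ) - s₂) / ((N : ℝ) - 2)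
  have hp : 0 < p := by
    have hN' : (3 : ℝ) ≤ N := by exact_mod_cast hN
    exact div_pos (by linarith) (by linarith)
  have hw : Measurable fun x : EuclideanSpace ℝ (Fin N) => ‖x‖ ^ (-s₂) := by fun_prop
  have hw0 : ∀ x : EuclideanSpace ℝ (Fin N), 0 ≤ ‖x‖ ^ (-s₂) := fun x => by positivity
  exact ⟨tendsto_lintegral_abs_rpow_sub_rpow_sub_rpow_mul hα hp (fun n => (hu n).aemeasurable)
      haeu hw hw0 (fun n => le_iSup_of_le n (lintegral_mono fun x => ENNReal.ofReal_le_ofReal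
        (by gcongr; exact le_add_of_nonneg_right (by positivity)))) hbdd.ne,
    tendsto_lintegral_abs_rpow_sub_rpow_sub_rpow_mul hβ hp (fun n => (hv n).aemeasurable)
      haev hw hw0 (fun n => le_iSup_of_le n (lintegral_mono fun x => ENNReal.ofReal_le_ofReal
        (by gcongr; exact le_add_of_nonneg_left (by positivity)))) hbdd.ne⟩

/-- Lemma 4.4: Brezis–Lieb type convergence for `|u_n|^α` and `|v_n|^β`. -/
theorem stmt_14 (N : ℕ) (hN : 3 ≤ N) (s₂ α β : ℝ)
    (hs₂0 : 0 ≤ s₂) (hs₂2 : s₂ < 2) (hα : 1 < α) (hβ : 1 < β)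
    (hαβ : α + β = 2 * ((N : ℝ) - s₂) / ((N : ℝ) - 2))
    (u v : ℕ → EuclideanSpace ℝ (Fin N) → ℝ)
    (hu : ∀ n, Measurable (u n)) (hv : ∀ n, Measurable (v n))
    (u₀ v₀ : EuclideanSpace ℝ (Fin N) → ℝ)
    (hbdd : (⨆ n, ∫⁻ x, ENNReal.ofReal
        ((|u n x| ^ (2 * ((N : ℝ) - s₂) / ((N : ℝ) - 2))
          + |v n x| ^ (2 * ((N : ℝ) - s₂) / ((N : ℝ) - 2))) * ‖x‖ ^ (-s₂))) < ⊤)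
    (haeu : ∀ᵐ (x : EuclideanSpace ℝ (Fin N)) ∂volume,
      Tendsto (fun n => u n x) atTop (nhds (u₀ x)))
    (haev : ∀ᵐ (x : EuclideanSpace ℝ (Fin N)) ∂volume,
      Tendsto (fun n => v n x) atTop (nhds (v₀ x))) :
    Tendsto (fun n => ∫⁻ x, ENNReal.ofReal
        (abs (|u n x| ^ α - |u n x - u₀ x| ^ α - |u₀ x| ^ α)
            ^ (2 * ((N : ℝ) - s₂) / ((N : ℝ) - 2) / α) * ‖x‖ ^ (-s₂)))
      atTop (nhds 0) ∧
    Tendsto (fun n => ∫⁻ x, ENNReal.ofReal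
        (abs (|v n x| ^ β - |v n x - v₀ x| ^ β - |v₀ x| ^ β)
            ^ (2 * ((N : ℝ) - s₂) / ((N : ℝ) - 2) / β) * ‖x‖ ^ (-s₂)))
      atTop (nhds 0) :=
  stmt_14_general N hN s₂ α β hs₂2 hα hβ u v hu hv u₀ v₀ hbdd haeu haev
end

section
/- (Cross-term vanishing, key step (4.25) in the proof of Lemma 4.6.) Let N ≥ 3 be an integer, let 0 ≤ s₂ < 2, and let α > 1, β > 1 with α + β = 2^*(s₂). Let (u_n) be a sequence of measurable functions ℝ^N → ℝ with sup_n ∫_{ℝ^N} |u_n(x)|^{2^*(s₂)} ‖x‖^{−s₂} dx < ∞ and u_n → u almost everywhere on ℝ^N, and let v : ℝ^N → ℝ be measurable with ∫_{ℝ^N} |v(x)|^{2^*(s₂)} ‖x‖^{−s₂} dx < ∞. Then ∫_{ℝ^N} |u_n(x) − u(x)|^{α} |v(x)|^{β} ‖x‖^{−s₂} dx → 0 as n → ∞. -/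
open MeasureTheory Filter ENNReal

section YoungAux
open Real

lemma young_scaled {α β : ℝ} (hα : 1 < α) (hβ : 1 < β) {a b t : ℝ}
    (ha : 0 ≤ a) (hb : 0 ≤ b) (ht : 0 < t) :
    a ^ α * b ^ β ≤ t * a ^ (α + β) + t ^ (-α / β) * b ^ (α + β) := by
  set p := α + β with hp_def
  have hα0 : 0 < α := by linarith
  have hβ0 : 0 < β := by linarith
  have hp0 : 0 < p := by positivity
  set s := t ^ (1 / p) with hs_def
  have hs0 : 0 < s := rpow_pos_of_pos ht _
  have hconj : (p / α).HolderConjugate (p / β) := by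
    refine Real.holderConjugate_iff.mpr ⟨?_, ?_⟩
    · rw [lt_div_iff₀ hα0, one_mul]; simp only [hp_def]; linarith
    · rw [inv_div, inv_div]; field_simp; rw [hp_def]
  have hx : (0:ℝ) ≤ (s * a) ^ α := rpow_nonneg (by positivity) _
  have hy : (0:ℝ) ≤ (s ^ (-α / β) * b) ^ β := rpow_nonneg (by positivity) _
  have key := Real.young_inequality_of_nonneg hx hy hconj
  have hxy : (s * a) ^ α * (s ^ (-α / β) * b) ^ β = a ^ α * b ^ β := by
    rw [mul_rpow hs0.le ha, mul_rpow (rpow_nonneg hs0.le _) hb, hs_def,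
      ← rpow_mul ht.le, ← rpow_mul ht.le, ← rpow_mul ht.le, mul_mul_mul_comm,
      ← rpow_add ht, show 1 / p * α + 1 / p * (-α / β) * β = 0 by field_simp; ring,
      Real.rpow_zero, one_mul]
  have hxr : ((s * a) ^ α) ^ (p / α) = t * a ^ p := by
    rw [← rpow_mul (by positivity), show α * (p / α) = p by field_simp,
      mul_rpow hs0.le ha, hs_def, ← rpow_mul ht.le,
      show 1 / p * p = 1 by field_simp, Real.rpow_one]
  have hyr : ((s ^ (-α / β) * b) ^ β) ^ (p / β) = t ^ (-α / β) * b ^ p := by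
    rw [← rpow_mul (by positivity), show β * (p / β) = p by field_simp,
      mul_rpow (rpow_nonneg hs0.le _) hb, hs_def, ← rpow_mul ht.le,
      ← rpow_mul ht.le, show 1 / p * (-α / β) * p = -α / β by field_simp]
  rw [hxy, hxr, hyr] at key
  have h1 : 1 ≤ p / α := by rw [le_div_iff₀ hα0, one_mul]; simp only [hp_def]; linarith
  have h2 : 1 ≤ p / β := by rw [le_div_iff₀ hβ0, one_mul]; simp only [hp_def]; linarith
  calc a ^ α * b ^ β ≤ t * a ^ p / (p / α) + t ^ (-α / β) * b ^ p / (p / β) := key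
    _ ≤ t * a ^ p + t ^ (-α / β) * b ^ p :=
      add_le_add (div_le_self (by positivity) h1) (div_le_self (by positivity) h2)


end YoungAux

lemma abs_sub_rpow_le {a b q : ℝ} (hq : 0 ≤ q) :
    |a - b| ^ q ≤ 2 ^ q * (|a| ^ q + |b| ^ q) := by
  have h1 : |a - b| ≤ 2 * max |a| |b| := by
    calc |a - b| ≤ |a| + |b| := abs_sub a b
      _ ≤ 2 * max |a| |b| := by
          rcases le_total |a| |b| with h | h
          · rw [max_eq_right h]; linarith
          · rw [max_eq_left h]; linarith
  calc |a - b| ^ q ≤ (2 * max |a| |b|) ^ q :=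
        Real.rpow_le_rpow (abs_nonneg _) h1 hq
    _ = 2 ^ q * (max |a| |b|) ^ q := Real.mul_rpow (by norm_num) (le_max_of_le_left (abs_nonneg _))
    _ ≤ 2 ^ q * (|a| ^ q + |b| ^ q) := by
        gcongr 2 ^ q * ?_
        rcases max_choice |a| |b| with h | h <;> rw [h]
        · exact le_add_of_nonneg_right (Real.rpow_nonneg (abs_nonneg _) _)
        · exact le_add_of_nonneg_left (Real.rpow_nonneg (abs_nonneg _) _)

/-- Cross-term vanishing, key step (4.25) in the proof of Lemma 4.6. -/
theorem stmt_15 (N : ℕ) (hN : 3 ≤ N) (s₂ α β : ℝ)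
    (hs₂0 : 0 ≤ s₂) (hs₂2 : s₂ < 2) (hα : 1 < α) (hβ : 1 < β)
    (hαβ : α + β = 2 * ((N : ℝ) - s₂) / ((N : ℝ) - 2))
    (u : ℕ → EuclideanSpace ℝ (Fin N) → ℝ) (hu : ∀ n, Measurable (u n))
    (u₀ : EuclideanSpace ℝ (Fin N) → ℝ)
    (hbdd : (⨆ n, ∫⁻ x,
        ENNReal.ofReal (|u n x| ^ (2 * ((N : ℝ) - s₂) / ((N : ℝ) - 2)) * ‖x‖ ^ (-s₂))) < ⊤)
    (hae : ∀ᵐ (x : EuclideanSpace ℝ (Fin N)) ∂volume,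
      Tendsto (fun n => u n x) atTop (nhds (u₀ x)))
    (v : EuclideanSpace ℝ (Fin N) → ℝ) (hv : Measurable v)
    (hvfin : (∫⁻ x,
        ENNReal.ofReal (|v x| ^ (2 * ((N : ℝ) - s₂) / ((N : ℝ) - 2)) * ‖x‖ ^ (-s₂))) < ⊤) :
    Tendsto (fun n => ∫⁻ x,
        ENNReal.ofReal (|u n x - u₀ x| ^ α * |v x| ^ β * ‖x‖ ^ (-s₂)))
      atTop (nhds 0) := by
  rw [← hαβ] at hbdd hvfin
  set q : ℝ := α + β with hq_def
  have hq1 : 1 ≤ q := by simp only [hq_def]; linarith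
  have hq0 : 0 < q := by linarith
  set wR : EuclideanSpace ℝ (Fin N) → ℝ := fun x => ‖x‖ ^ (-s₂) with hwR_def
  have hwR0 : ∀ x, 0 ≤ wR x := fun x => Real.rpow_nonneg (norm_nonneg x) _
  have hwRm : Measurable wR := measurable_norm.pow_const _
  have hu₀ : AEMeasurable u₀ (volume) :=
    aemeasurable_of_tendsto_metrizable_ae atTop (fun n => (hu n).aemeasurable) hae
  set M : ℝ≥0∞ := ⨆ n, ∫⁻ x, ENNReal.ofReal (|u n x| ^ q * wR x) with hM_def
  have hM : M < ⊤ := hbdd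
  have hunM : ∀ n, (∫⁻ x, ENNReal.ofReal (|u n x| ^ q * wR x)) ≤ M :=
    fun n => le_iSup (fun n => ∫⁻ x, ENNReal.ofReal (|u n x| ^ q * wR x)) n
  have humeas : ∀ n, Measurable fun x => ENNReal.ofReal (|u n x| ^ q * wR x) :=
    fun n => (((hu n).abs.pow_const _).mul hwRm).ennreal_ofReal
  -- Fatou: the limit u₀ also satisfies the bound
  have hu₀M : (∫⁻ x, ENNReal.ofReal (|u₀ x| ^ q * wR x)) ≤ M := by
    have hpt : ∀ᵐ x ∂(volume : Measure (EuclideanSpace ℝ (Fin N))),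
        ENNReal.ofReal (|u₀ x| ^ q * wR x)
          = liminf (fun n => ENNReal.ofReal (|u n x| ^ q * wR x)) atTop := by
      filter_upwards [hae] with x hx
      have h1 : Tendsto (fun n => ENNReal.ofReal (|u n x| ^ q * wR x)) atTop
          (nhds (ENNReal.ofReal (|u₀ x| ^ q * wR x))) := by
        refine (ENNReal.continuous_ofReal.tendsto _).comp ?_
        refine Tendsto.mul_const _ ?_
        exact ((Real.continuousAt_rpow_const _ q (Or.inr hq0.le)).tendsto.comp hx.abs)
      exact h1.liminf_eq.symm
    calc (∫⁻ x, ENNReal.ofReal (|u₀ x| ^ q * wR x))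
        = ∫⁻ x, liminf (fun n => ENNReal.ofReal (|u n x| ^ q * wR x)) atTop :=
          lintegral_congr_ae hpt
      _ ≤ liminf (fun n => ∫⁻ x, ENNReal.ofReal (|u n x| ^ q * wR x)) atTop :=
          lintegral_liminf_le humeas
      _ ≤ M := by
          refine liminf_le_of_le (by isBoundedDefault) ?_
          intro b hb
          obtain ⟨n, hn⟩ := hb.exists
          exact hn.trans (hunM n)
  -- uniform bound on the differences
  set K : ℝ≥0∞ := ENNReal.ofReal (2 ^ q) * (M + M) with hK_def
  have hKtop : K ≠ ⊤ := by
    refine ENNReal.mul_ne_top ENNReal.ofReal_ne_top ?_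
    exact (ENNReal.add_lt_top.mpr ⟨hM, hM⟩).ne
  have hPK : ∀ n, (∫⁻ x, ENNReal.ofReal (|u n x - u₀ x| ^ q * wR x)) ≤ K := by
    intro n
    have hpt : ∀ x, ENNReal.ofReal (|u n x - u₀ x| ^ q * wR x)
        ≤ ENNReal.ofReal (2 ^ q) *
          (ENNReal.ofReal (|u n x| ^ q * wR x) + ENNReal.ofReal (|u₀ x| ^ q * wR x)) := by
      intro x
      rw [← ENNReal.ofReal_add (by positivity) (by positivity),
        ← ENNReal.ofReal_mul (by positivity)]
      refine ENNReal.ofReal_le_ofReal ?_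
      calc |u n x - u₀ x| ^ q * wR x ≤ 2 ^ q * (|u n x| ^ q + |u₀ x| ^ q) * wR x :=
            mul_le_mul_of_nonneg_right (abs_sub_rpow_le hq0.le) (hwR0 x)
        _ = 2 ^ q * (|u n x| ^ q * wR x + |u₀ x| ^ q * wR x) := by ring
    calc (∫⁻ x, ENNReal.ofReal (|u n x - u₀ x| ^ q * wR x))
        ≤ ∫⁻ x, ENNReal.ofReal (2 ^ q) *
            (ENNReal.ofReal (|u n x| ^ q * wR x) + ENNReal.ofReal (|u₀ x| ^ q * wR x)) :=
          lintegral_mono hpt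
      _ = ENNReal.ofReal (2 ^ q) * ∫⁻ x,
            (ENNReal.ofReal (|u n x| ^ q * wR x) + ENNReal.ofReal (|u₀ x| ^ q * wR x)) :=
          lintegral_const_mul' _ _ ENNReal.ofReal_ne_top
      _ = ENNReal.ofReal (2 ^ q) *
            ((∫⁻ x, ENNReal.ofReal (|u n x| ^ q * wR x))
              + ∫⁻ x, ENNReal.ofReal (|u₀ x| ^ q * wR x)) := by
          rw [lintegral_add_left (humeas n)]
      _ ≤ K := by
          rw [hK_def]
          exact mul_le_mul_right (add_le_add (hunM n) hu₀M) _
  -- main argument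
  rw [ENNReal.tendsto_nhds_zero]
  intro ε hε
  have hε2 : (0:ℝ≥0∞) < ε / 2 := ENNReal.div_pos hε.ne' (by norm_num)
  -- choose t small
  set c : ℝ≥0∞ := min (ε / 2 / (K + 1)) 1 with hc_def
  have hc0 : 0 < c := by
    refine lt_min ?_ zero_lt_one
    exact ENNReal.div_pos hε2.ne' (by simp [hKtop])
  have hctop : c ≠ ⊤ := by
    refine ne_top_of_le_ne_top ?_ (min_le_right _ _); exact one_ne_top
  set t : ℝ := c.toReal with ht_def
  have ht0 : 0 < t := ENNReal.toReal_pos hc0.ne' hctop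
  have hoft : ENNReal.ofReal t = c := ENNReal.ofReal_toReal hctop
  have htK : ENNReal.ofReal t * K ≤ ε / 2 := by
    rw [hoft]
    calc c * K ≤ (ε / 2 / (K + 1)) * (K + 1) :=
          mul_le_mul' (min_le_left _ _) (le_add_right le_rfl)
      _ = ε / 2 := ENNReal.div_mul_cancel (by simp) (by simp [hKtop])
  -- the dominated convergence part
  set g : ℕ → EuclideanSpace ℝ (Fin N) → ℝ := fun n x =>
    max (|u n x - u₀ x| ^ α * |v x| ^ β - t * |u n x - u₀ x| ^ q) 0 with hg_def
  set G : ℕ → EuclideanSpace ℝ (Fin N) → ℝ≥0∞ := fun n x =>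
    ENNReal.ofReal (g n x * wR x) with hG_def
  have hGmeas : ∀ n, AEMeasurable (G n) (volume) := by
    intro n
    refine AEMeasurable.ennreal_ofReal (AEMeasurable.mul ?_ hwRm.aemeasurable)
    refine AEMeasurable.max ?_ aemeasurable_const
    refine AEMeasurable.sub ?_ ?_
    · exact (((continuous_abs.measurable.comp_aemeasurable ((hu n).aemeasurable.sub hu₀)).pow
          aemeasurable_const).mul ((hv.abs.pow_const _).aemeasurable))
    · exact (aemeasurable_const.mul ((continuous_abs.measurable.comp_aemeasurable
          ((hu n).aemeasurable.sub hu₀)).pow aemeasurable_const))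
  have hGbound : ∀ n, G n ≤ᵐ[volume] fun x =>
      ENNReal.ofReal (t ^ (-α / β) * (|v x| ^ q * wR x)) := by
    intro n
    refine Eventually.of_forall fun x => ?_
    refine ENNReal.ofReal_le_ofReal ?_
    rw [← mul_assoc]
    refine mul_le_mul_of_nonneg_right ?_ (hwR0 x)
    refine max_le ?_ (by positivity)
    have := young_scaled hα hβ (abs_nonneg (u n x - u₀ x)) (abs_nonneg (v x)) ht0
    linarith
  have hboundfin : (∫⁻ x, ENNReal.ofReal (t ^ (-α / β) * (|v x| ^ q * wR x))) ≠ ⊤ := by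
    have : (∫⁻ x, ENNReal.ofReal (t ^ (-α / β) * (|v x| ^ q * wR x)))
        = ENNReal.ofReal (t ^ (-α / β)) * ∫⁻ x, ENNReal.ofReal (|v x| ^ q * wR x) := by
      simp_rw [ENNReal.ofReal_mul (Real.rpow_nonneg ht0.le _)]
      exact lintegral_const_mul' _ _ ENNReal.ofReal_ne_top
    rw [this]
    exact ENNReal.mul_ne_top ENNReal.ofReal_ne_top hvfin.ne
  have hGlim : ∀ᵐ x ∂(volume : Measure (EuclideanSpace ℝ (Fin N))),
      Tendsto (fun n => G n x) atTop (nhds 0) := by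
    filter_upwards [hae] with x hx
    have h1 : Tendsto (fun n => |u n x - u₀ x|) atTop (nhds 0) := by
      have := (hx.sub (tendsto_const_nhds (x := u₀ x))).abs
      simpa using this
    have hr : ∀ c : ℝ, 0 < c → Tendsto (fun n => |u n x - u₀ x| ^ c) atTop (nhds 0) := by
      intro c hc
      have := (Real.continuousAt_rpow_const 0 c (Or.inr hc.le)).tendsto.comp h1
      simpa [Real.zero_rpow hc.ne', Function.comp_def] using this
    have h2 : Tendsto (fun n => g n x * wR x) atTop (nhds 0) := by
      have h3 : Tendsto (fun n => |u n x - u₀ x| ^ α * |v x| ^ β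
          - t * |u n x - u₀ x| ^ q) atTop (nhds 0) := by
        have := ((hr α (by linarith)).mul_const (|v x| ^ β)).sub
          ((hr q hq0).const_mul t)
        simpa using this
      have h4 : Tendsto (fun n => g n x) atTop (nhds 0) := by
        have := h3.max (tendsto_const_nhds (x := (0:ℝ)))
        simpa [hg_def] using this
      simpa using h4.mul_const (wR x)
    have := (ENNReal.continuous_ofReal.tendsto 0).comp h2
    simpa [hG_def, Function.comp_def] using this
  have hGint : Tendsto (fun n => ∫⁻ x, G n x) atTop (nhds 0) := by
    have := tendsto_lintegral_of_dominated_convergence'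
      (fun x => ENNReal.ofReal (t ^ (-α / β) * (|v x| ^ q * wR x)))
      hGmeas hGbound hboundfin hGlim
    simpa using this
  have hGev : ∀ᶠ n in atTop, (∫⁻ x, G n x) ≤ ε / 2 :=
    hGint.eventually_le_const hε2
  filter_upwards [hGev] with n hn
  -- pointwise: |u n - u₀|^α |v|^β wR ≤ t * (|u n - u₀|^q wR) + g n wR
  have hpt : ∀ x, ENNReal.ofReal (|u n x - u₀ x| ^ α * |v x| ^ β * wR x)
      ≤ ENNReal.ofReal (t * (|u n x - u₀ x| ^ q * wR x)) + G n x := by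
    intro x
    rw [← ENNReal.ofReal_add (by positivity)
      (mul_nonneg (le_max_right _ _) (hwR0 x))]
    refine ENNReal.ofReal_le_ofReal ?_
    have h5 : |u n x - u₀ x| ^ α * |v x| ^ β
        ≤ t * |u n x - u₀ x| ^ q + g n x := by
      have h6 : |u n x - u₀ x| ^ α * |v x| ^ β - t * |u n x - u₀ x| ^ q ≤ g n x :=
        le_max_left _ _
      linarith
    calc |u n x - u₀ x| ^ α * |v x| ^ β * wR x
        ≤ (t * |u n x - u₀ x| ^ q + g n x) * wR x :=
          mul_le_mul_of_nonneg_right h5 (hwR0 x)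
      _ = t * (|u n x - u₀ x| ^ q * wR x) + g n x * wR x := by ring
  calc (∫⁻ x, ENNReal.ofReal (|u n x - u₀ x| ^ α * |v x| ^ β * wR x))
      ≤ ∫⁻ x, (ENNReal.ofReal (t * (|u n x - u₀ x| ^ q * wR x)) + G n x) :=
        lintegral_mono hpt
    _ = (∫⁻ x, ENNReal.ofReal (t * (|u n x - u₀ x| ^ q * wR x))) + ∫⁻ x, G n x := by
        refine lintegral_add_right' _ (hGmeas n)
    _ ≤ ε / 2 + ε / 2 := by
        refine add_le_add ?_ hn
        calc (∫⁻ x, ENNReal.ofReal (t * (|u n x - u₀ x| ^ q * wR x)))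
            = ENNReal.ofReal t * ∫⁻ x, ENNReal.ofReal (|u n x - u₀ x| ^ q * wR x) := by
              simp_rw [ENNReal.ofReal_mul ht0.le]
              exact lintegral_const_mul' _ _ ENNReal.ofReal_ne_top
          _ ≤ ENNReal.ofReal t * K := mul_le_mul_right (hPK n) _
          _ ≤ ε / 2 := htK
    _ = ε := ENNReal.add_halves ε
end
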